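/- arXiv:nlin/0209063 — 3 statements merged into one kernel-verified Lean document; each statement's English description precedes it below -/
import Mathlib

section
/- (Jacobi–Trudi identity) For a partition λ of length ℓ, the Schur function equals the determinant s_λ = det(h_{λ_i - i + j})_{1≤i,j≤ℓ}, where h_k are the complete homogeneous symmetric functions (with h_k = 0 for k < 0 and h₀ = 1). -/
open Finset

noncomputable def hpoly (n : ℕ) (k : ℤ) : MvPolynomial ℕ ℂ :=
  if 0 ≤ k then
    ∑ d ∈ Finset.Nat.antidiagonalTuple n k.toNat, ∏ i : Fin n, MvPolynomial.X (i : ℕ) ^ d i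
  else 0

namespace JT

open Equiv MvPolynomial

variable (n ℓ : ℕ) (lam : Fin ℓ → ℕ)

/-- The set of exponent tuples for a row of total (possibly negative) size `m`. -/
def rowSet (m : ℤ) : Finset (Fin n → ℕ) :=
  if 0 ≤ m then Finset.Nat.antidiagonalTuple n m.toNat else ∅

lemma hpoly_eq (m : ℤ) :
    hpoly n m = ∑ d ∈ rowSet n m, ∏ t : Fin n, (X (t : ℕ) : MvPolynomial ℕ ℂ) ^ d t := by
  unfold hpoly rowSet
  split <;> simp

/-- A term in the expansion of the determinant: a permutation together with
an exponent tuple for each row. -/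
abbrev Term := Σ _ : Equiv.Perm (Fin ℓ), (Fin ℓ → Fin n → ℕ)

/-- The big index finset. -/
def B : Finset (Term n ℓ) :=
  Finset.univ.sigma fun σ => Fintype.piFinset fun i => rowSet n ((lam i : ℤ) - i + σ i)

/-- The weight of a term. -/
noncomputable def wt (p : Term n ℓ) : MvPolynomial ℕ ℂ :=
  ∏ i : Fin ℓ, ∏ t : Fin n, (X (t : ℕ) : MvPolynomial ℕ ℂ) ^ p.2 i t

noncomputable def fwt (p : Term n ℓ) : MvPolynomial ℕ ℂ :=
  (Equiv.Perm.sign p.1 : ℤ) • wt n ℓ p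

lemma det_eq_sum_B :
    Matrix.det (Matrix.of fun i j : Fin ℓ =>
        hpoly n ((lam i : ℤ) - (i : ℤ) + (j : ℤ))) = ∑ p ∈ B n ℓ lam, fwt n ℓ p := by
  rw [← Matrix.det_transpose, Matrix.det_apply]
  rw [B, Finset.sum_sigma]
  refine Finset.sum_congr rfl fun σ _ => ?_
  have : (∏ i, (Matrix.of fun i j : Fin ℓ => hpoly n ((lam i : ℤ) - i + j)).transpose (σ i) i)
      = ∑ D ∈ Fintype.piFinset fun i => rowSet n ((lam i : ℤ) - (i : ℤ) + (σ i : ℤ)),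
          wt n ℓ ⟨σ, D⟩ := by
    have h1 : (∏ i, (Matrix.of fun i j : Fin ℓ => hpoly n ((lam i : ℤ) - i + j)).transpose (σ i) i)
        = ∏ i, ∑ d ∈ rowSet n ((lam i : ℤ) - (i : ℤ) + (σ i : ℤ)),
            ∏ t : Fin n, (X (t : ℕ) : MvPolynomial ℕ ℂ) ^ d t := by
      refine Finset.prod_congr rfl fun i _ => ?_
      simp only [Matrix.transpose_apply, Matrix.of_apply]
      exact hpoly_eq n _
    rw [h1, Finset.prod_univ_sum]
    rfl
  rw [this, Finset.smul_sum]
  rfl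


/-! ### Path heights and crossings -/

/-- Extension of the exponent tuple of row `i` to all of `ℕ`. -/
def Dx (p : Term n ℓ) (i : Fin ℓ) (s : ℕ) : ℕ :=
  if h : s < n then p.2 i ⟨s, h⟩ else 0

/-- Partial sums of a row. -/
def C (p : Term n ℓ) (i : Fin ℓ) (t : ℕ) : ℕ := ∑ s ∈ Finset.range t, Dx n ℓ p i s

/-- The height of path `i` at level `t`. -/
def G (p : Term n ℓ) (i : Fin ℓ) (t : ℕ) : ℤ := (C n ℓ p i t : ℤ) - (p.1 i : ℤ)

lemma C_succ (p : Term n ℓ) (i : Fin ℓ) (t : ℕ) :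
    C n ℓ p i (t + 1) = C n ℓ p i t + Dx n ℓ p i t := Finset.sum_range_succ _ _

lemma C_mono (p : Term n ℓ) (i : Fin ℓ) {t t' : ℕ} (h : t ≤ t') :
    C n ℓ p i t ≤ C n ℓ p i t' :=
  Finset.sum_le_sum_of_subset (Finset.range_subset_range.2 h)

lemma G_mono (p : Term n ℓ) (i : Fin ℓ) {t t' : ℕ} (h : t ≤ t') :
    G n ℓ p i t ≤ G n ℓ p i t' := by
  unfold G; have := C_mono n ℓ p i h; omega

lemma G_succ_sub (p : Term n ℓ) (i : Fin ℓ) (t : ℕ) :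
    G n ℓ p i (t + 1) - G n ℓ p i t = (Dx n ℓ p i t : ℤ) := by
  unfold G; rw [C_succ]; push_cast; ring

lemma C_n (p : Term n ℓ) (i : Fin ℓ) : C n ℓ p i n = ∑ t : Fin n, p.2 i t := by
  rw [C, ← Fin.sum_univ_eq_sum_range]
  exact Finset.sum_congr rfl fun t _ => by simp [Dx]

lemma mem_B_iff (p : Term n ℓ) :
    p ∈ B n ℓ lam ↔ ∀ i, p.2 i ∈ rowSet n ((lam i : ℤ) - i + p.1 i) := by
  unfold B
  rw [Finset.mem_sigma, Fintype.mem_piFinset]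
  simp

lemma mem_rowSet {m : ℤ} {d : Fin n → ℕ} (hd : d ∈ rowSet n m) :
    (∑ t : Fin n, (d t : ℤ)) = m := by
  unfold rowSet at hd
  split at hd
  · rename_i h
    rw [Finset.Nat.mem_antidiagonalTuple] at hd
    have := congrArg (Nat.cast : ℕ → ℤ) hd
    push_cast at this
    rw [this, Int.toNat_of_nonneg h]
  · simp at hd

lemma mem_rowSet' {m : ℤ} (hm : 0 ≤ m) {d : Fin n → ℕ}
    (hd : (∑ t : Fin n, (d t : ℤ)) = m) : d ∈ rowSet n m := by
  unfold rowSet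
  rw [if_pos hm, Finset.Nat.mem_antidiagonalTuple]
  have : ((∑ i : Fin n, d i : ℕ) : ℤ) = m := by push_cast; rw [← hd]
  omega

lemma C_n_of_mem {p : Term n ℓ} (hp : p ∈ B n ℓ lam) (i : Fin ℓ) :
    (C n ℓ p i n : ℤ) = (lam i : ℤ) - i + p.1 i := by
  rw [C_n]
  rw [mem_B_iff] at hp
  have := mem_rowSet n (hp i)
  rw [← this]
  push_cast
  rfl

lemma G_n_of_mem {p : Term n ℓ} (hp : p ∈ B n ℓ lam) (i : Fin ℓ) :
    G n ℓ p i n = (lam i : ℤ) - i := by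
  rw [G, C_n_of_mem n ℓ lam hp]; ring

/-- Crossing of paths `i` and `j` between levels `t` and `t+1`. -/
def Cr (p : Term n ℓ) (i j : Fin ℓ) (t : ℕ) : Prop :=
  i ≠ j ∧ t < n ∧ G n ℓ p i t ≤ G n ℓ p j (t + 1) ∧ G n ℓ p j t ≤ G n ℓ p i (t + 1)

def Crossing (p : Term n ℓ) : Prop := ∃ i j t, Cr n ℓ p i j t

lemma Cr.symm {p : Term n ℓ} {i j : Fin ℓ} {t : ℕ} (h : Cr n ℓ p i j t) :
    Cr n ℓ p j i t := ⟨h.1.symm, h.2.1, h.2.2.2, h.2.2.1⟩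

/-- The lowest crossing level. -/
noncomputable def t0 (p : Term n ℓ) : ℕ := sInf {t | ∃ i j, Cr n ℓ p i j t}

/-- `i`'s path passes through the point `(x, t0 p)`. -/
def onPt (p : Term n ℓ) (i : Fin ℓ) (x : ℤ) : Prop :=
  G n ℓ p i (t0 n ℓ p) ≤ x ∧ x ≤ G n ℓ p i (t0 n ℓ p + 1)

open scoped Classical in
/-- Candidate lowest crossing points at level `t0`. -/
noncomputable def CP (p : Term n ℓ) : Finset ℤ :=
  ((Finset.univ ×ˢ Finset.univ).filter fun q : Fin ℓ × Fin ℓ =>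
    Cr n ℓ p q.1 q.2 (t0 n ℓ p)).image fun q =>
      max (G n ℓ p q.1 (t0 n ℓ p)) (G n ℓ p q.2 (t0 n ℓ p))

open scoped Classical in
/-- The leftmost crossing point at level `t0`. -/
noncomputable def x0 (p : Term n ℓ) : ℤ :=
  if h : (CP n ℓ p).Nonempty then (CP n ℓ p).min' h else 0

open scoped Classical in
/-- The paths through the point `(x0 p, t0 p)`. -/
noncomputable def P (p : Term n ℓ) : Finset (Fin ℓ) :=
  Finset.univ.filter fun i => onPt n ℓ p i (x0 n ℓ p)

/-- Tail-swap of rows `a` and `b` below level `t0`, with the appropriate splice at level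
`t0` and the permutation composed with the transposition. -/
noncomputable def swapTerm (p : Term n ℓ) (a b : Fin ℓ) : Term n ℓ :=
  ⟨p.1 * Equiv.swap a b, fun i t =>
    if i = a then
      (if (t : ℕ) < t0 n ℓ p then p.2 b t else if (t : ℕ) = t0 n ℓ p then
        (G n ℓ p a (t0 n ℓ p + 1) - G n ℓ p b (t0 n ℓ p)).toNat else p.2 a t)
    else if i = b then
      (if (t : ℕ) < t0 n ℓ p then p.2 a t else if (t : ℕ) = t0 n ℓ p then
        (G n ℓ p b (t0 n ℓ p + 1) - G n ℓ p a (t0 n ℓ p)).toNat else p.2 b t)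
    else p.2 i t⟩

noncomputable def invol (p : Term n ℓ) : Term n ℓ :=
  if h : (P n ℓ p).Nonempty then
    if h2 : ((P n ℓ p).erase ((P n ℓ p).min' h)).Nonempty then
      swapTerm n ℓ p ((P n ℓ p).min' h) (((P n ℓ p).erase ((P n ℓ p).min' h)).min' h2)
    else p
  else p

/-! ### Basic facts about the lowest crossing -/

section CrossFacts

variable {n ℓ : ℕ} {lam : Fin ℓ → ℕ} {p : Term n ℓ}

lemma t0_mem (hcr : Crossing n ℓ p) : ∃ i j, Cr n ℓ p i j (t0 n ℓ p) := by
  have hne : {t | ∃ i j, Cr n ℓ p i j t}.Nonempty := by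
    obtain ⟨i, j, t, h⟩ := hcr; exact ⟨t, i, j, h⟩
  exact Nat.sInf_mem hne

lemma t0_min {t : ℕ} (ht : t < t0 n ℓ p) : ¬ ∃ i j, Cr n ℓ p i j t :=
  Nat.notMem_of_lt_sInf ht

lemma t0_lt_n (hcr : Crossing n ℓ p) : t0 n ℓ p < n := by
  obtain ⟨i, j, h⟩ := t0_mem hcr; exact h.2.1

open scoped Classical in
lemma CP_nonempty (hcr : Crossing n ℓ p) : (CP n ℓ p).Nonempty := by
  obtain ⟨i, j, h⟩ := t0_mem hcr
  exact ⟨_, Finset.mem_image.2 ⟨(i, j), Finset.mem_filter.2 ⟨by simp, h⟩, rfl⟩⟩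

open scoped Classical in
lemma x0_mem (hcr : Crossing n ℓ p) : x0 n ℓ p ∈ CP n ℓ p := by
  rw [x0, dif_pos (CP_nonempty hcr)]
  exact Finset.min'_mem _ _

lemma exists_onPt_x0 (hcr : Crossing n ℓ p) :
    ∃ i j, i ≠ j ∧ onPt n ℓ p i (x0 n ℓ p) ∧ onPt n ℓ p j (x0 n ℓ p) := by
  classical
  obtain ⟨q, hq, hmax⟩ := Finset.mem_image.1 (x0_mem hcr)
  obtain ⟨-, hcrq⟩ := Finset.mem_filter.1 hq
  obtain ⟨hne, -, h1, h2⟩ := hcrq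
  refine ⟨q.1, q.2, hne, ?_, ?_⟩
  · exact ⟨hmax ▸ le_max_left _ _, hmax ▸ max_le (G_mono n ℓ p q.1 (Nat.le_succ _)) h2⟩
  · exact ⟨hmax ▸ le_max_right _ _, hmax ▸ max_le h1 (G_mono n ℓ p q.2 (Nat.le_succ _))⟩

lemma x0_le (hcr : Crossing n ℓ p) {y : ℤ} {i j : Fin ℓ} (hij : i ≠ j)
    (hi : onPt n ℓ p i y) (hj : onPt n ℓ p j y) : x0 n ℓ p ≤ y := by
  classical
  have hcrij : Cr n ℓ p i j (t0 n ℓ p) :=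
    ⟨hij, t0_lt_n hcr, le_trans hi.1 hj.2, le_trans hj.1 hi.2⟩
  have hmem : max (G n ℓ p i (t0 n ℓ p)) (G n ℓ p j (t0 n ℓ p)) ∈ CP n ℓ p :=
    Finset.mem_image.2 ⟨(i, j), Finset.mem_filter.2 ⟨by simp, hcrij⟩, rfl⟩
  have := Finset.min'_le _ _ hmem
  rw [x0, dif_pos (CP_nonempty hcr)]
  exact le_trans (Finset.min'_le _ _ hmem) (max_le hi.1 hj.1)

open scoped Classical in
lemma mem_P_iff {i : Fin ℓ} : i ∈ P n ℓ p ↔ onPt n ℓ p i (x0 n ℓ p) := by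
  rw [P, Finset.mem_filter]; simp

lemma P_pair (hcr : Crossing n ℓ p) :
    ∃ a b : Fin ℓ, a ≠ b ∧ a ∈ P n ℓ p ∧ b ∈ P n ℓ p := by
  obtain ⟨i, j, hij, hi, hj⟩ := exists_onPt_x0 hcr
  exact ⟨i, j, hij, mem_P_iff.2 hi, mem_P_iff.2 hj⟩

end CrossFacts

/-! ### The tail swap -/

section SwapFacts

variable {n ℓ : ℕ} {lam : Fin ℓ → ℕ} {p : Term n ℓ} {a b : Fin ℓ}

lemma swapTerm_comm (hab : a ≠ b) : swapTerm n ℓ p a b = swapTerm n ℓ p b a := by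
  unfold swapTerm
  refine Sigma.ext ?_ (heq_of_eq ?_)
  · simp [Equiv.swap_comm]
  · funext i t
    by_cases hia : i = a <;> by_cases hib : i = b <;>
      simp [hia, hib, hab, Ne.symm hab]

lemma swapTerm_fst : (swapTerm n ℓ p a b).1 = p.1 * Equiv.swap a b := rfl

lemma swapTerm_fst_apply (i : Fin ℓ) :
    (swapTerm n ℓ p a b).1 i = p.1 (Equiv.swap a b i) := rfl

lemma Dx_swapTerm_lt {s : ℕ} (hs : s < t0 n ℓ p) (i : Fin ℓ) :
    Dx n ℓ (swapTerm n ℓ p a b) i s = Dx n ℓ p (Equiv.swap a b i) s := by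
  unfold Dx swapTerm
  by_cases hsn : s < n
  · by_cases hia : i = a
    · subst hia; simp [hs, Equiv.swap_apply_left, hsn]
    · by_cases hib : i = b
      · subst hib; simp [hs, hia, Equiv.swap_apply_right, hsn]
      · simp [hia, hib, Equiv.swap_apply_of_ne_of_ne hia hib, hsn]
  · simp [hsn]

lemma Dx_swapTerm_gt {s : ℕ} (hs : t0 n ℓ p < s) (i : Fin ℓ) :
    Dx n ℓ (swapTerm n ℓ p a b) i s = Dx n ℓ p i s := by
  unfold Dx swapTerm
  by_cases hsn : s < n
  · by_cases hia : i = a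
    · subst hia; simp [Nat.lt_asymm hs, (Nat.ne_of_gt hs), hsn]
    · by_cases hib : i = b
      · subst hib; simp [hia, Nat.lt_asymm hs, (Nat.ne_of_gt hs), hsn]
      · simp [hia, hib, hsn]
  · simp [hsn]

/-- Below (and at) the crossing level, the new path `i` is the old path `swap a b i`. -/
lemma G_swapTerm_le {t : ℕ} (ht : t ≤ t0 n ℓ p) (i : Fin ℓ) :
    G n ℓ (swapTerm n ℓ p a b) i t = G n ℓ p (Equiv.swap a b i) t := by
  unfold G C
  rw [swapTerm_fst_apply]
  congr 2
  refine Finset.sum_congr rfl fun s hs => ?_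
  exact Dx_swapTerm_lt (lt_of_lt_of_le (Finset.mem_range.1 hs) ht) i

/-- Above the crossing level, the new path `i` is the old path `i`. -/
lemma G_swapTerm_gt (ha : a ∈ P n ℓ p) (hb : b ∈ P n ℓ p) (hab : a ≠ b)
    (ht0 : t0 n ℓ p < n) :
    ∀ t, t0 n ℓ p < t → ∀ i, G n ℓ (swapTerm n ℓ p a b) i t = G n ℓ p i t := by
  have hax := mem_P_iff.1 ha
  have hbx := mem_P_iff.1 hb
  intro t ht
  induction t, ht using Nat.le_induction with
  | base =>
    intro i
    simp only [Nat.succ_eq_add_one]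
    have hsucc : G n ℓ (swapTerm n ℓ p a b) i (t0 n ℓ p + 1)
        = G n ℓ (swapTerm n ℓ p a b) i (t0 n ℓ p)
          + Dx n ℓ (swapTerm n ℓ p a b) i (t0 n ℓ p) := by
      have := G_succ_sub n ℓ (swapTerm n ℓ p a b) i (t0 n ℓ p)
      omega
    rw [hsucc, G_swapTerm_le le_rfl i]
    by_cases hia : i = a
    · rw [hia, Equiv.swap_apply_left]
      have hD : (Dx n ℓ (swapTerm n ℓ p a b) a (t0 n ℓ p) : ℤ)
          = G n ℓ p a (t0 n ℓ p + 1) - G n ℓ p b (t0 n ℓ p) := by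
        unfold Dx swapTerm
        rw [dif_pos ht0]
        simp only [if_pos rfl, lt_irrefl, if_neg (lt_irrefl _)]
        exact Int.toNat_of_nonneg (by have := le_trans hbx.1 hax.2; omega)
      rw [hD]; ring
    · by_cases hib : i = b
      · rw [hib, Equiv.swap_apply_right]
        have hD : (Dx n ℓ (swapTerm n ℓ p a b) b (t0 n ℓ p) : ℤ)
            = G n ℓ p b (t0 n ℓ p + 1) - G n ℓ p a (t0 n ℓ p) := by
          unfold Dx swapTerm
          rw [dif_pos ht0]
          simp only [if_neg (Ne.symm hab), if_pos rfl, lt_irrefl,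
            if_neg (lt_irrefl _)]
          exact Int.toNat_of_nonneg (by have := le_trans hax.1 hbx.2; omega)
        rw [hD]; ring
      · rw [Equiv.swap_apply_of_ne_of_ne hia hib]
        have hd : Dx n ℓ (swapTerm n ℓ p a b) i (t0 n ℓ p) = Dx n ℓ p i (t0 n ℓ p) := by
          unfold Dx swapTerm; simp [hia, hib]
        rw [hd]
        have := G_succ_sub n ℓ p i (t0 n ℓ p)
        omega
  | succ t ht ih =>
    intro i
    have h1 := G_succ_sub n ℓ (swapTerm n ℓ p a b) i t
    have h2 := G_succ_sub n ℓ p i t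
    have h3 := Dx_swapTerm_gt (a := a) (b := b) (p := p) ht i
    have h4 := ih i
    omega

end SwapFacts

section SwapFacts2

variable {n ℓ : ℕ} {lam : Fin ℓ → ℕ} {p : Term n ℓ} {a b : Fin ℓ}

lemma cr_swapTerm (ha : a ∈ P n ℓ p) (hb : b ∈ P n ℓ p) (hab : a ≠ b)
    (ht0 : t0 n ℓ p < n) :
    Cr n ℓ (swapTerm n ℓ p a b) a b (t0 n ℓ p) := by
  have hax := mem_P_iff.1 ha
  have hbx := mem_P_iff.1 hb
  have h1 : G n ℓ (swapTerm n ℓ p a b) a (t0 n ℓ p) = G n ℓ p b (t0 n ℓ p) := by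
    rw [G_swapTerm_le le_rfl, Equiv.swap_apply_left]
  have h2 : G n ℓ (swapTerm n ℓ p a b) b (t0 n ℓ p) = G n ℓ p a (t0 n ℓ p) := by
    rw [G_swapTerm_le le_rfl, Equiv.swap_apply_right]
  have h3 : G n ℓ (swapTerm n ℓ p a b) a (t0 n ℓ p + 1) = G n ℓ p a (t0 n ℓ p + 1) :=
    G_swapTerm_gt ha hb hab ht0 _ (Nat.lt_succ_self _) a
  have h4 : G n ℓ (swapTerm n ℓ p a b) b (t0 n ℓ p + 1) = G n ℓ p b (t0 n ℓ p + 1) :=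
    G_swapTerm_gt ha hb hab ht0 _ (Nat.lt_succ_self _) b
  exact ⟨hab, ht0, by rw [h1, h4]; exact le_trans hbx.1 hbx.2,
    by rw [h2, h3]; exact le_trans hax.1 hax.2⟩

lemma crossing_swapTerm (ha : a ∈ P n ℓ p) (hb : b ∈ P n ℓ p) (hab : a ≠ b)
    (ht0 : t0 n ℓ p < n) : Crossing n ℓ (swapTerm n ℓ p a b) :=
  ⟨a, b, t0 n ℓ p, cr_swapTerm ha hb hab ht0⟩

lemma t0_swapTerm (ha : a ∈ P n ℓ p) (hb : b ∈ P n ℓ p) (hab : a ≠ b)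
    (ht0 : t0 n ℓ p < n) : t0 n ℓ (swapTerm n ℓ p a b) = t0 n ℓ p := by
  refine le_antisymm (Nat.sInf_le ⟨a, b, cr_swapTerm ha hb hab ht0⟩) ?_
  by_contra hlt
  push_neg at hlt
  obtain ⟨i, j, hcrij⟩ := t0_mem (crossing_swapTerm ha hb hab ht0)
  set t := t0 n ℓ (swapTerm n ℓ p a b) with htdef
  have ht1 : t + 1 ≤ t0 n ℓ p := hlt
  refine t0_min (p := p) (lt_of_lt_of_le (Nat.lt_succ_self t) ht1)
    ⟨Equiv.swap a b i, Equiv.swap a b j, ?_⟩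
  obtain ⟨hij, htn, hA, hB⟩ := hcrij
  rw [G_swapTerm_le (by omega) i, G_swapTerm_le (by omega) j] at hA hB
  exact ⟨fun h => hij (Equiv.injective _ h), htn, hA, hB⟩

/-- Translation of `onPt` for the swapped term. -/
lemma onPt_swapTerm (ha : a ∈ P n ℓ p) (hb : b ∈ P n ℓ p) (hab : a ≠ b)
    (ht0 : t0 n ℓ p < n) (i : Fin ℓ) (y : ℤ) :
    onPt n ℓ (swapTerm n ℓ p a b) i y ↔
      (G n ℓ p (Equiv.swap a b i) (t0 n ℓ p) ≤ y ∧ y ≤ G n ℓ p i (t0 n ℓ p + 1)) := by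
  unfold onPt
  rw [t0_swapTerm ha hb hab ht0, G_swapTerm_le le_rfl,
    G_swapTerm_gt ha hb hab ht0 _ (Nat.lt_succ_self _)]

lemma pt_transfer_one (ha : a ∈ P n ℓ p) (hb : b ∈ P n ℓ p) (hab : a ≠ b)
    (ht0 : t0 n ℓ p < n) {i : Fin ℓ} {y : ℤ}
    (h : onPt n ℓ (swapTerm n ℓ p a b) i y) :
    onPt n ℓ p i y ∨ onPt n ℓ p (Equiv.swap a b i) y := by
  have hax := mem_P_iff.1 ha
  have hbx := mem_P_iff.1 hb
  rw [onPt_swapTerm ha hb hab ht0] at h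
  by_cases hia : i = a
  · subst hia
    rw [Equiv.swap_apply_left] at h ⊢
    by_cases hy : y ≤ G n ℓ p b (t0 n ℓ p + 1)
    · exact Or.inr ⟨h.1, hy⟩
    · push_neg at hy
      exact Or.inl ⟨le_trans hax.1 (le_trans hbx.2 hy.le), h.2⟩
  · by_cases hib : i = b
    · subst hib
      rw [Equiv.swap_apply_right] at h ⊢
      by_cases hy : y ≤ G n ℓ p a (t0 n ℓ p + 1)
      · exact Or.inr ⟨h.1, hy⟩
      · push_neg at hy
        exact Or.inl ⟨le_trans hbx.1 (le_trans hax.2 hy.le), h.2⟩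
    · rw [Equiv.swap_apply_of_ne_of_ne hia hib] at h
      exact Or.inl h

lemma x0_swapTerm (hcr : Crossing n ℓ p) (ha : a ∈ P n ℓ p) (hb : b ∈ P n ℓ p)
    (hab : a ≠ b) : x0 n ℓ (swapTerm n ℓ p a b) = x0 n ℓ p := by
  have ht0 := t0_lt_n hcr
  have hax := mem_P_iff.1 ha
  have hbx := mem_P_iff.1 hb
  have hcrq := crossing_swapTerm ha hb hab ht0
  refine le_antisymm ?_ ?_
  · refine x0_le hcrq hab ?_ ?_
    · rw [onPt_swapTerm ha hb hab ht0, Equiv.swap_apply_left]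
      exact ⟨hbx.1, hax.2⟩
    · rw [onPt_swapTerm ha hb hab ht0, Equiv.swap_apply_right]
      exact ⟨hax.1, hbx.2⟩
  · obtain ⟨i, j, hij, hi, hj⟩ := exists_onPt_x0 hcrq
    set y := x0 n ℓ (swapTerm n ℓ p a b) with hy
    -- transfer the pair of paths through (y, t0) to the original term
    by_cases hija : (i = a ∧ j = b) ∨ (i = b ∧ j = a)
    · -- both swapped: direct
      have hi' := (onPt_swapTerm ha hb hab ht0 i y).1 hi
      have hj' := (onPt_swapTerm ha hb hab ht0 j y).1 hj
      rcases hija with ⟨rfl, rfl⟩ | ⟨rfl, rfl⟩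
      · rw [Equiv.swap_apply_left] at hi'
        rw [Equiv.swap_apply_right] at hj'
        exact x0_le hcr hij ⟨hj'.1, hi'.2⟩ ⟨hi'.1, hj'.2⟩
      · rw [Equiv.swap_apply_right] at hi'
        rw [Equiv.swap_apply_left] at hj'
        exact x0_le hcr hij ⟨hj'.1, hi'.2⟩ ⟨hi'.1, hj'.2⟩
    · rcases pt_transfer_one ha hb hab ht0 hi with hi' | hi' <;>
      rcases pt_transfer_one ha hb hab ht0 hj with hj' | hj'
      · exact x0_le hcr hij hi' hj'
      · refine x0_le hcr (i := i) (j := Equiv.swap a b j) ?_ hi' hj'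
        intro h
        by_cases hja : j = a
        · subst hja; rw [Equiv.swap_apply_left] at h
          by_cases hib : i = b
          · exact hija (Or.inr ⟨hib, rfl⟩)
          · subst h
            exact hib rfl
        · by_cases hjb : j = b
          · subst hjb; rw [Equiv.swap_apply_right] at h
            exact hija (Or.inl ⟨h, rfl⟩)
          · rw [Equiv.swap_apply_of_ne_of_ne hja hjb] at h
            exact hij h
      · refine x0_le hcr (i := Equiv.swap a b i) (j := j) ?_ hi' hj'
        intro h
        by_cases hia : i = a
        · subst hia; rw [Equiv.swap_apply_left] at h
          by_cases hjb : j = b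
          · exact hija (Or.inl ⟨rfl, hjb⟩)
          · exact hjb h.symm
        · by_cases hib : i = b
          · subst hib; rw [Equiv.swap_apply_right] at h
            exact hija (Or.inr ⟨rfl, h.symm⟩)
          · rw [Equiv.swap_apply_of_ne_of_ne hia hib] at h
            exact hij h
      · exact x0_le hcr (fun h => hij (Equiv.injective _ h)) hi' hj'

lemma P_swapTerm (hcr : Crossing n ℓ p) (ha : a ∈ P n ℓ p) (hb : b ∈ P n ℓ p)
    (hab : a ≠ b) : P n ℓ (swapTerm n ℓ p a b) = P n ℓ p := by
  have ht0 := t0_lt_n hcr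
  have hax := mem_P_iff.1 ha
  have hbx := mem_P_iff.1 hb
  ext i
  rw [mem_P_iff, mem_P_iff, x0_swapTerm hcr ha hb hab,
    onPt_swapTerm ha hb hab ht0]
  by_cases hia : i = a
  · subst hia
    rw [Equiv.swap_apply_left]
    exact iff_of_true ⟨hbx.1, hax.2⟩ hax
  · by_cases hib : i = b
    · subst hib
      rw [Equiv.swap_apply_right]
      exact iff_of_true ⟨hax.1, hbx.2⟩ hbx
    · rw [Equiv.swap_apply_of_ne_of_ne hia hib]
      exact Iff.rfl

end SwapFacts2

section SwapFacts3

variable {n ℓ : ℕ} {lam : Fin ℓ → ℕ} {p : Term n ℓ} {a b : Fin ℓ}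

lemma Dx_eq_snd {p : Term n ℓ} {i : Fin ℓ} {t : Fin n} :
    Dx n ℓ p i (t : ℕ) = p.2 i t := by
  unfold Dx
  rw [dif_pos t.isLt]

lemma swapTerm_snd_apply (p : Term n ℓ) (a b i : Fin ℓ) (t : Fin n) :
    (swapTerm n ℓ p a b).2 i t =
      (if i = a then
        (if (t : ℕ) < t0 n ℓ p then p.2 b t else if (t : ℕ) = t0 n ℓ p then
          (G n ℓ p a (t0 n ℓ p + 1) - G n ℓ p b (t0 n ℓ p)).toNat else p.2 a t)
      else if i = b then
        (if (t : ℕ) < t0 n ℓ p then p.2 a t else if (t : ℕ) = t0 n ℓ p then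
          (G n ℓ p b (t0 n ℓ p + 1) - G n ℓ p a (t0 n ℓ p)).toNat else p.2 b t)
      else p.2 i t) := rfl

lemma swapTerm_swapTerm (hcr : Crossing n ℓ p) (ha : a ∈ P n ℓ p) (hb : b ∈ P n ℓ p)
    (hab : a ≠ b) : swapTerm n ℓ (swapTerm n ℓ p a b) a b = p := by
  have ht0 := t0_lt_n hcr
  have ht0q := t0_swapTerm ha hb hab ht0
  have hGgt : ∀ i, G n ℓ (swapTerm n ℓ p a b) i (t0 n ℓ p + 1)
      = G n ℓ p i (t0 n ℓ p + 1) :=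
    fun i => G_swapTerm_gt ha hb hab ht0 _ (Nat.lt_succ_self _) i
  have hGa : G n ℓ (swapTerm n ℓ p a b) a (t0 n ℓ p) = G n ℓ p b (t0 n ℓ p) := by
    rw [G_swapTerm_le le_rfl, Equiv.swap_apply_left]
  have hGb : G n ℓ (swapTerm n ℓ p a b) b (t0 n ℓ p) = G n ℓ p a (t0 n ℓ p) := by
    rw [G_swapTerm_le le_rfl, Equiv.swap_apply_right]
  refine Sigma.ext ?_ (heq_of_eq ?_)
  · show p.1 * Equiv.swap a b * Equiv.swap a b = p.1
    rw [mul_assoc, Equiv.swap_mul_self, mul_one]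
  · funext i t
    rw [swapTerm_snd_apply, ht0q]
    by_cases hia : i = a
    · rw [if_pos hia]
      rcases Nat.lt_trichotomy ((t : ℕ)) (t0 n ℓ p) with h | h | h
      · rw [if_pos h, swapTerm_snd_apply, if_neg (Ne.symm hab), if_pos rfl,
          if_pos h, hia]
      · rw [if_neg (by omega : ¬ (t : ℕ) < t0 n ℓ p), if_pos h, hGb, hGgt a]
        have hd := G_succ_sub n ℓ p a (t0 n ℓ p)
        rw [hia, hd, Int.toNat_natCast]
        have ht' : t = ⟨t0 n ℓ p, ht0⟩ := Fin.ext h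
        rw [ht', ← Dx_eq_snd]
      · rw [if_neg (by omega : ¬ (t : ℕ) < t0 n ℓ p),
          if_neg (by omega : ¬ (t : ℕ) = t0 n ℓ p), swapTerm_snd_apply,
          if_pos rfl, if_neg (by omega : ¬ (t : ℕ) < t0 n ℓ p),
          if_neg (by omega : ¬ (t : ℕ) = t0 n ℓ p), hia]
    · rw [if_neg hia]
      by_cases hib : i = b
      · rw [if_pos hib]
        rcases Nat.lt_trichotomy ((t : ℕ)) (t0 n ℓ p) with h | h | h
        · rw [if_pos h, swapTerm_snd_apply, if_pos rfl, if_pos h, hib]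
        · rw [if_neg (by omega : ¬ (t : ℕ) < t0 n ℓ p), if_pos h, hGa, hGgt b]
          have hd := G_succ_sub n ℓ p b (t0 n ℓ p)
          rw [hib, hd, Int.toNat_natCast]
          have ht' : t = ⟨t0 n ℓ p, ht0⟩ := Fin.ext h
          rw [ht', ← Dx_eq_snd]
        · rw [if_neg (by omega : ¬ (t : ℕ) < t0 n ℓ p),
            if_neg (by omega : ¬ (t : ℕ) = t0 n ℓ p), swapTerm_snd_apply,
            if_neg (Ne.symm hab), if_pos rfl, if_neg (by omega : ¬ (t : ℕ) < t0 n ℓ p),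
            if_neg (by omega : ¬ (t : ℕ) = t0 n ℓ p), hib]
      · rw [if_neg hib, swapTerm_snd_apply, if_neg hia, if_neg hib]

lemma mem_B_swapTerm (hp : p ∈ B n ℓ lam) (ha : a ∈ P n ℓ p) (hb : b ∈ P n ℓ p)
    (hab : a ≠ b) (ht0 : t0 n ℓ p < n) :
    swapTerm n ℓ p a b ∈ B n ℓ lam := by
  rw [mem_B_iff]
  intro i
  have hGn : G n ℓ (swapTerm n ℓ p a b) i n = (lam i : ℤ) - i :=
    (G_swapTerm_gt ha hb hab ht0 n ht0 i).trans (G_n_of_mem n ℓ lam hp i)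
  have hCn : (C n ℓ (swapTerm n ℓ p a b) i n : ℤ)
      = (lam i : ℤ) - i + (swapTerm n ℓ p a b).1 i := by
    have : G n ℓ (swapTerm n ℓ p a b) i n
        = (C n ℓ (swapTerm n ℓ p a b) i n : ℤ) - ((swapTerm n ℓ p a b).1 i : ℤ) := rfl
    omega
  refine mem_rowSet' n (by omega) ?_
  have hs : (∑ t : Fin n, ((swapTerm n ℓ p a b).2 i t : ℤ))
      = (C n ℓ (swapTerm n ℓ p a b) i n : ℤ) := by
    rw [C_n]; push_cast; rfl
  rw [hs, hCn]

lemma sum_two_swap {M : Type*} [AddCommMonoid M] (f g : Fin ℓ → M) (hab : a ≠ b)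
    (hfg : ∀ i, i ≠ a → i ≠ b → f i = g i) (hsum : f a + f b = g a + g b) :
    ∑ i, f i = ∑ i, g i := by
  classical
  have key : ∀ h : Fin ℓ → M, ∑ i, h i
      = h a + h b + ∑ i ∈ (Finset.univ.erase a).erase b, h i := by
    intro h
    rw [← Finset.add_sum_erase _ h (Finset.mem_univ a)]
    rw [← Finset.add_sum_erase _ h (Finset.mem_erase.2 ⟨Ne.symm hab, Finset.mem_univ b⟩)]
    rw [add_assoc]
  rw [key f, key g, hsum]
  congr 1
  refine Finset.sum_congr rfl fun i hi => ?_
  rw [Finset.mem_erase, Finset.mem_erase] at hi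
  exact hfg i hi.2.1 hi.1

lemma wt_eq_prod_t (p : Term n ℓ) :
    wt n ℓ p = ∏ t : Fin n, (X (t : ℕ) : MvPolynomial ℕ ℂ) ^ (∑ i, p.2 i t) := by
  rw [wt, Finset.prod_comm]
  exact Finset.prod_congr rfl fun t _ => Finset.prod_pow_eq_pow_sum _ _ _

lemma wt_swapTerm (ha : a ∈ P n ℓ p) (hb : b ∈ P n ℓ p)
    (hab : a ≠ b) (ht0 : t0 n ℓ p < n) :
    wt n ℓ (swapTerm n ℓ p a b) = wt n ℓ p := by
  have hax := mem_P_iff.1 ha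
  have hbx := mem_P_iff.1 hb
  rw [wt_eq_prod_t, wt_eq_prod_t]
  refine Finset.prod_congr rfl fun t _ => ?_
  congr 1
  refine sum_two_swap _ _ hab (fun i hia hib => ?_) ?_
  · show (if i = a then _ else if i = b then _ else _) = _
    rw [if_neg hia, if_neg hib]
  · show (if a = a then _ else _) + (if b = a then _ else if b = b then _ else _)
      = p.2 a t + p.2 b t
    rw [if_pos rfl, if_neg (Ne.symm hab), if_pos rfl]
    rcases Nat.lt_trichotomy ((t : ℕ)) (t0 n ℓ p) with h | h | h
    · rw [if_pos h, if_pos h, Nat.add_comm]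
    · rw [h, if_neg (lt_irrefl (t0 n ℓ p)), if_pos rfl,
        if_neg (lt_irrefl (t0 n ℓ p)), if_pos rfl]
      have h1 := G_succ_sub n ℓ p a (t0 n ℓ p)
      have h2 := G_succ_sub n ℓ p b (t0 n ℓ p)
      have e1 : t = ⟨t0 n ℓ p, ht0⟩ := Fin.ext h
      have e2 : p.2 a t = Dx n ℓ p a (t0 n ℓ p) := by rw [e1, ← Dx_eq_snd]
      have e3 : p.2 b t = Dx n ℓ p b (t0 n ℓ p) := by rw [e1, ← Dx_eq_snd]
      have n1 : (0:ℤ) ≤ G n ℓ p a (t0 n ℓ p + 1) - G n ℓ p b (t0 n ℓ p) := by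
        have := le_trans hbx.1 hax.2; omega
      have n2 : (0:ℤ) ≤ G n ℓ p b (t0 n ℓ p + 1) - G n ℓ p a (t0 n ℓ p) := by
        have := le_trans hax.1 hbx.2; omega
      omega
    · have hlt : ¬ ((t : ℕ) < t0 n ℓ p) := by omega
      have heq : ¬ ((t : ℕ) = t0 n ℓ p) := by omega
      rw [if_neg hlt, if_neg heq, if_neg hlt, if_neg heq]

end SwapFacts3

section Involution

variable {n ℓ : ℕ} {lam : Fin ℓ → ℕ}

lemma invol_spec {p : Term n ℓ} (hp : p ∈ B n ℓ lam) (hcr : Crossing n ℓ p) :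
    invol n ℓ p ∈ B n ℓ lam ∧ Crossing n ℓ (invol n ℓ p) ∧
      invol n ℓ (invol n ℓ p) = p ∧
      fwt n ℓ p + fwt n ℓ (invol n ℓ p) = 0 ∧ invol n ℓ p ≠ p := by
  classical
  obtain ⟨x, y, hxy, hx, hy⟩ := P_pair hcr
  have h1 : (P n ℓ p).Nonempty := ⟨x, hx⟩
  set a := (P n ℓ p).min' h1 with ha_def
  have ha : a ∈ P n ℓ p := Finset.min'_mem _ _
  have h2 : ((P n ℓ p).erase a).Nonempty := by
    by_cases hxa : x = a
    · exact ⟨y, Finset.mem_erase.2 ⟨by rw [← hxa]; exact Ne.symm hxy, hy⟩⟩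
    · exact ⟨x, Finset.mem_erase.2 ⟨hxa, hx⟩⟩
  set b := ((P n ℓ p).erase a).min' h2 with hb_def
  have hbe : b ∈ (P n ℓ p).erase a := Finset.min'_mem _ _
  have hb : b ∈ P n ℓ p := Finset.mem_of_mem_erase hbe
  have hab : a ≠ b := (Finset.ne_of_mem_erase hbe).symm
  have ht0 := t0_lt_n hcr
  have heq : invol n ℓ p = swapTerm n ℓ p a b := by
    rw [invol, dif_pos h1, dif_pos h2]
  have hsign : ((Equiv.Perm.sign (swapTerm n ℓ p a b).1 : ℤˣ) : ℤ)
      = -((Equiv.Perm.sign p.1 : ℤˣ) : ℤ) := by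
    rw [swapTerm_fst, Equiv.Perm.sign_mul, Equiv.Perm.sign_swap hab]
    simp
  refine ⟨?_, ?_, ?_, ?_, ?_⟩
  · rw [heq]; exact mem_B_swapTerm hp ha hb hab ht0
  · rw [heq]; exact crossing_swapTerm ha hb hab ht0
  · rw [heq]
    have hPq := P_swapTerm hcr ha hb hab
    have hmin : ∀ {s t : Finset (Fin ℓ)} (h : s = t) (hs : s.Nonempty) (ht : t.Nonempty),
        s.min' hs = t.min' ht := by
      intro s t h hs ht; subst h; rfl
    have hne' : (P n ℓ (swapTerm n ℓ p a b)).Nonempty := by rw [hPq]; exact h1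
    have hA : (P n ℓ (swapTerm n ℓ p a b)).min' hne' = a := hmin hPq hne' h1
    have hne2' : ((P n ℓ (swapTerm n ℓ p a b)).erase
        ((P n ℓ (swapTerm n ℓ p a b)).min' hne')).Nonempty := by
      rw [hA, hPq]; exact h2
    have hB2 : ((P n ℓ (swapTerm n ℓ p a b)).erase
        ((P n ℓ (swapTerm n ℓ p a b)).min' hne')).min' hne2' = b :=
      hmin (by rw [hA, hPq]) hne2' h2
    rw [invol, dif_pos hne', dif_pos hne2', hB2, hA]
    exact swapTerm_swapTerm hcr ha hb hab
  · rw [heq]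
    unfold fwt
    rw [wt_swapTerm ha hb hab ht0, hsign, neg_smul]
    exact add_neg_cancel _
  · rw [heq]
    intro h
    have hfst := congrArg Sigma.fst h
    rw [swapTerm_fst] at hfst
    have h1' : p.1 * Equiv.swap a b = p.1 * 1 := by rw [mul_one]; exact hfst
    exact hab (Equiv.swap_eq_one_iff.1 (mul_left_cancel h1'))

open scoped Classical in
lemma sum_crossing :
    ∑ p ∈ (B n ℓ lam).filter (fun p => Crossing n ℓ p), fwt n ℓ p = 0 := by
  classical
  refine Finset.sum_involution (fun p _ => invol n ℓ p) ?_ ?_ ?_ ?_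
  · intro p hp
    obtain ⟨hB, hcr⟩ := Finset.mem_filter.1 hp
    exact (invol_spec hB hcr).2.2.2.1
  · intro p hp _
    obtain ⟨hB, hcr⟩ := Finset.mem_filter.1 hp
    exact (invol_spec hB hcr).2.2.2.2
  · intro p hp
    obtain ⟨hB, hcr⟩ := Finset.mem_filter.1 hp
    exact Finset.mem_filter.2 ⟨(invol_spec hB hcr).1, (invol_spec hB hcr).2.1⟩
  · intro p hp
    obtain ⟨hB, hcr⟩ := Finset.mem_filter.1 hp
    exact (invol_spec hB hcr).2.2.1

end Involution

/-! ### Non-crossing terms -/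

section NonCross

variable {n ℓ : ℕ} {lam : Fin ℓ → ℕ} {p : Term n ℓ}

lemma C_stable (p : Term n ℓ) (i : Fin ℓ) {t : ℕ} (ht : n ≤ t) :
    C n ℓ p i t = C n ℓ p i n := by
  unfold C
  rw [Finset.range_eq_Ico,
    ← Finset.sum_Ico_consecutive _ (Nat.zero_le n) ht]
  have : ∑ s ∈ Finset.Ico n t, Dx n ℓ p i s = 0 := by
    refine Finset.sum_eq_zero fun s hs => ?_
    rw [Finset.mem_Ico] at hs
    unfold Dx
    rw [dif_neg (by omega)]
  rw [this, add_zero, Finset.range_eq_Ico]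

lemma perm_eq_one_of_strictMono {m : ℕ} (σ : Equiv.Perm (Fin m))
    (h : ∀ i j : Fin m, i < j → σ i < σ j) : σ = 1 := by
  have key : ∀ (τ : Equiv.Perm (Fin m)), (∀ i j : Fin m, i < j → τ i < τ j) →
      ∀ i : Fin m, (i : ℕ) ≤ (τ i : ℕ) := by
    intro τ hτ
    have aux : ∀ k (hk : k < m), k ≤ (τ ⟨k, hk⟩ : ℕ) := by
      intro k
      induction k with
      | zero => omega
      | succ k ih =>
        intro hk
        have hk' : k < m := by omega
        have h1 := ih hk'
        have h2 : τ ⟨k, hk'⟩ < τ ⟨k + 1, hk⟩ := hτ _ _ (by simp [Fin.lt_def])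
        rw [Fin.lt_def] at h2
        omega
    intro i
    have := aux (i : ℕ) i.isLt
    simpa using this
  have hinv : ∀ i j : Fin m, i < j → σ⁻¹ i < σ⁻¹ j := by
    intro i j hij
    rcases lt_trichotomy (σ⁻¹ i) (σ⁻¹ j) with h' | h' | h'
    · exact h'
    · exfalso; rw [← (show σ (σ⁻¹ i) = i from σ.apply_symm_apply i), ← (show σ (σ⁻¹ j) = j from σ.apply_symm_apply j), h'] at hij
      exact lt_irrefl _ hij
    · exfalso
      have := h _ _ h'
      rw [(show σ (σ⁻¹ j) = j from σ.apply_symm_apply j), (show σ (σ⁻¹ i) = i from σ.apply_symm_apply i)] at this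
      exact lt_irrefl _ (lt_trans hij this)
  ext i
  have h1 := key σ h i
  have h2 := key σ⁻¹ hinv (σ i)
  rw [(show σ⁻¹ (σ i) = i from σ.symm_apply_apply i)] at h2
  simp only [Equiv.Perm.one_apply]
  omega

lemma fst_eq_one_of_noncross (hlam : Antitone lam) (hp : p ∈ B n ℓ lam)
    (hnc : ¬ Crossing n ℓ p) : p.1 = 1 := by
  refine perm_eq_one_of_strictMono p.1 fun i j hij => ?_
  by_contra hc
  push_neg at hc
  have hne : p.1 i ≠ p.1 j := fun h => (ne_of_lt hij) (p.1.injective h)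
  have hgt : p.1 j < p.1 i := lt_of_le_of_ne hc (Ne.symm hne)
  -- paths i and j must cross
  have hG0 : G n ℓ p i 0 < G n ℓ p j 0 := by
    unfold G C
    simp only [Finset.range_zero, Finset.sum_empty]
    have := Fin.lt_def.1 hgt
    omega
  have hGn : G n ℓ p j n < G n ℓ p i n := by
    rw [G_n_of_mem n ℓ lam hp, G_n_of_mem n ℓ lam hp]
    have h1 : lam j ≤ lam i := hlam (le_of_lt hij)
    have h2 := Fin.lt_def.1 hij
    omega
  set Sset := {t : ℕ | G n ℓ p j t ≤ G n ℓ p i t} with hSset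
  have hSne : Sset.Nonempty := ⟨n, le_of_lt hGn⟩
  set tm := sInf Sset with htm
  have htm_mem : tm ∈ Sset := Nat.sInf_mem hSne
  have htm_pos : 0 < tm := by
    rcases Nat.eq_zero_or_pos tm with h0 | h0
    · exfalso
      have : (0 : ℕ) ∈ Sset := h0 ▸ htm_mem
      rw [hSset] at this
      exact absurd this (not_le.2 hG0)
    · exact h0
  have htm_le : tm ≤ n := Nat.sInf_le (le_of_lt hGn)
  have hprev : ¬ (tm - 1) ∈ Sset := Nat.notMem_of_lt_sInf (by omega)
  rw [hSset, Set.mem_setOf_eq, not_le] at hprev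
  rw [hSset, Set.mem_setOf_eq] at htm_mem
  have hn_pos : tm - 1 < n := by omega
  refine hnc ⟨i, j, tm - 1, fun h => (ne_of_lt hij) h, hn_pos, ?_, ?_⟩
  · have e : tm - 1 + 1 = tm := by omega
    rw [e]
    exact le_trans (le_of_lt hprev) (G_mono n ℓ p j (by omega))
  · have e : tm - 1 + 1 = tm := by omega
    rw [e]
    exact le_trans (G_mono n ℓ p j (by omega)) htm_mem

/-- Strict dominance of earlier paths over later ones. -/
def Dominance (p : Term n ℓ) : Prop :=
  ∀ i j : Fin ℓ, i < j → ∀ t, G n ℓ p j (t + 1) < G n ℓ p i t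

lemma dominance_of_noncross (h1 : p.1 = 1) (hnc : ¬ Crossing n ℓ p) :
    Dominance p := by
  intro i j hij
  have hG0 : ∀ k : Fin ℓ, G n ℓ p k 0 = -(k : ℤ) := by
    intro k
    unfold G C
    simp [h1]
  have base : G n ℓ p j 1 < G n ℓ p i 0 := by
    rcases Nat.eq_zero_or_pos n with h0 | h0
    · have c1 : C n ℓ p j 1 = C n ℓ p j n := C_stable p j (by omega)
      have c2 : C n ℓ p j 0 = C n ℓ p j n := C_stable p j (by omega)
      have e : G n ℓ p j 1 = G n ℓ p j 0 := by unfold G; rw [c1, c2]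
      rw [e, hG0, hG0]
      have := Fin.lt_def.1 hij
      omega
    · by_contra hcon
      push_neg at hcon
      refine hnc ⟨i, j, 0, fun h => (ne_of_lt hij) h, h0, hcon, ?_⟩
      have hh : G n ℓ p j 0 < G n ℓ p i 1 :=
        calc G n ℓ p j 0 = -(j : ℤ) := hG0 j
          _ ≤ -(i : ℤ) - 1 := by have := Fin.lt_def.1 hij; omega
          _ < G n ℓ p i 0 + 0 := by rw [hG0]; omega
          _ ≤ G n ℓ p i 1 := by rw [add_zero]; exact G_mono n ℓ p i (by omega)
      simpa using le_of_lt hh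
  intro t
  induction t with
  | zero => exact base
  | succ t ih =>
    by_cases htn : t + 1 < n
    · by_contra hcon
      push_neg at hcon
      refine hnc ⟨i, j, t + 1, fun h => (ne_of_lt hij) h, htn, hcon, ?_⟩
      exact le_trans (le_of_lt ih) (G_mono n ℓ p i (by omega))
    · have c1 : C n ℓ p j (t + 1 + 1) = C n ℓ p j n := C_stable p j (by omega)
      have c2 : C n ℓ p j (t + 1) = C n ℓ p j n := C_stable p j (by omega)
      have e : C n ℓ p j (t + 1 + 1) = C n ℓ p j (t + 1) := by rw [c1, c2]
      have e' : G n ℓ p j (t + 1 + 1) = G n ℓ p j (t + 1) := by unfold G; rw [e]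
      rw [e']
      exact lt_of_lt_of_le ih (G_mono n ℓ p i (by omega))

lemma noncross_of_dominance (hdom : Dominance p) : ¬ Crossing n ℓ p := by
  rintro ⟨i, j, t, hcr⟩
  rcases lt_trichotomy i j with hij | hij | hij
  · exact absurd hcr.2.2.1 (not_le.2 (hdom i j hij t))
  · exact hcr.1 hij
  · exact absurd hcr.2.2.2 (not_le.2 (hdom j i hij t))

end NonCross

/-! ### Bijection with semistandard Young tableaux -/

section Bijection

variable {n ℓ : ℕ} {lam : Fin ℓ → ℕ} {μ : YoungDiagram}

/-- A downward-closed subset of `range N` is an initial segment. -/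
lemma initseg {s : Finset ℕ} {N : ℕ} (hs : s ⊆ Finset.range N)
    (hdc : ∀ a b : ℕ, a ≤ b → b ∈ s → a ∈ s) : s = Finset.range s.card := by
  ext x
  simp only [Finset.mem_range]
  constructor
  · intro hx
    have hsub : Finset.range (x + 1) ⊆ s := fun y hy =>
      hdc y x (by simpa using Nat.lt_succ_iff.1 (Finset.mem_range.1 hy)) hx
    have := Finset.card_le_card hsub
    rw [Finset.card_range] at this
    omega
  · intro hx
    by_contra hxs
    have hsub : s ⊆ Finset.range x := by
      intro y hy
      rw [Finset.mem_range]
      by_contra hyx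
      exact hxs (hdc x y (by omega) hy)
    have := Finset.card_le_card hsub
    rw [Finset.card_range] at this
    omega

lemma cell_iff (hμ : ∀ i j : ℕ, (i, j) ∈ μ ↔ ∃ hi : i < ℓ, j < lam ⟨i, hi⟩)
    (i : Fin ℓ) (j : ℕ) : ((i : ℕ), j) ∈ μ ↔ j < lam i := by
  rw [hμ]
  constructor
  · rintro ⟨hi, h⟩
    simpa using h
  · intro h
    exact ⟨i.isLt, by simpa using h⟩

/-- The exponent tuples of a tableau. -/
def Dof (n : ℕ) (lam : Fin ℓ → ℕ) (T : SemistandardYoungTableau μ) : Term n ℓ :=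
  ⟨1, fun i t => ((Finset.range (lam i)).filter (fun j => T i j = (t : ℕ))).card⟩

lemma C_Dof (T : SemistandardYoungTableau μ) (i : Fin ℓ) :
    ∀ t : ℕ, t ≤ n → C n ℓ (Dof n lam T) i t
      = ((Finset.range (lam i)).filter (fun j => T i j < t)).card := by
  intro t
  induction t with
  | zero =>
    intro _
    rw [show C n ℓ (Dof n lam T) i 0 = 0 from rfl]
    rw [Finset.filter_false_of_mem (fun j _ => by omega), Finset.card_empty]
  | succ t ih =>
    intro ht
    rw [C_succ, ih (by omega)]
    have hDx : Dx n ℓ (Dof n lam T) i t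
        = ((Finset.range (lam i)).filter (fun j => T i j = t)).card := by
      unfold Dx
      rw [dif_pos (by omega : t < n)]
      rfl
    rw [hDx]
    have hun : (Finset.range (lam i)).filter (fun j => T i j < t + 1)
        = ((Finset.range (lam i)).filter (fun j => T i j < t))
          ∪ ((Finset.range (lam i)).filter (fun j => T i j = t)) := by
      ext x
      simp only [Finset.mem_filter, Finset.mem_union]
      constructor
      · rintro ⟨hx, hv⟩
        rcases Nat.lt_or_ge (T i x) t with h | h
        · exact Or.inl ⟨hx, h⟩
        · exact Or.inr ⟨hx, by omega⟩
      · rintro (⟨hx, hv⟩ | ⟨hx, hv⟩) <;> exact ⟨hx, by omega⟩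
    rw [hun, Finset.card_union_of_disjoint]
    rw [Finset.disjoint_left]
    intro x hx hx'
    rw [Finset.mem_filter] at hx hx'
    omega

lemma C_Dof_n (hμ : ∀ i j : ℕ, (i, j) ∈ μ ↔ ∃ hi : i < ℓ, j < lam ⟨i, hi⟩)
    (T : SemistandardYoungTableau μ) (hT : ∀ i j : ℕ, (i, j) ∈ μ → T i j < n)
    (i : Fin ℓ) : C n ℓ (Dof n lam T) i n = lam i := by
  rw [C_Dof T i n le_rfl]
  rw [Finset.filter_true_of_mem, Finset.card_range]
  intro j hj
  exact hT i j ((cell_iff hμ i j).2 (Finset.mem_range.1 hj))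

lemma Dof_mem_B (hμ : ∀ i j : ℕ, (i, j) ∈ μ ↔ ∃ hi : i < ℓ, j < lam ⟨i, hi⟩)
    (T : SemistandardYoungTableau μ) (hT : ∀ i j : ℕ, (i, j) ∈ μ → T i j < n) :
    Dof n lam T ∈ B n ℓ lam := by
  rw [mem_B_iff]
  intro i
  have h1 : ((1 : Equiv.Perm (Fin ℓ)) i : ℤ) = (i : ℤ) := by
    rw [Equiv.Perm.one_apply]
  refine mem_rowSet' n (by rw [show (Dof n lam T).1 = 1 from rfl, h1]; omega) ?_
  rw [show (Dof n lam T).1 = 1 from rfl, h1]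
  have hs : (∑ t : Fin n, ((Dof n lam T).2 i t : ℤ)) = (C n ℓ (Dof n lam T) i n : ℤ) := by
    rw [C_n]; push_cast; rfl
  rw [hs, C_Dof_n hμ T hT i]
  ring

lemma G_Dof (T : SemistandardYoungTableau μ) (i : Fin ℓ) (t : ℕ) :
    G n ℓ (Dof n lam T) i t = (C n ℓ (Dof n lam T) i t : ℤ) - (i : ℤ) := by
  unfold G
  rw [show (Dof n lam T).1 = 1 from rfl, Equiv.Perm.one_apply]

lemma Dof_dominance (hμ : ∀ i j : ℕ, (i, j) ∈ μ ↔ ∃ hi : i < ℓ, j < lam ⟨i, hi⟩)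
    (hlam : Antitone lam)
    (T : SemistandardYoungTableau μ) (hT : ∀ i j : ℕ, (i, j) ∈ μ → T i j < n) :
    Dominance (Dof n lam T) := by
  intro i j hij t
  have hij' : (i : ℕ) < (j : ℕ) := Fin.lt_def.1 hij
  rw [G_Dof, G_Dof]
  by_cases htn : t + 1 ≤ n
  · have hcount : ((Finset.range (lam j)).filter (fun x => T j x < t + 1)).card
        ≤ ((Finset.range (lam i)).filter (fun x => T i x < t)).card := by
      refine Finset.card_le_card ?_
      intro x hx
      rw [Finset.mem_filter, Finset.mem_range] at hx ⊢
      obtain ⟨hx1, hx2⟩ := hx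
      have hcell : ((j : ℕ), x) ∈ μ := (cell_iff hμ j x).2 hx1
      have hTs : T i x < T j x := T.col_strict hij' hcell
      refine ⟨lt_of_lt_of_le hx1 (hlam (le_of_lt hij)), by omega⟩
    rw [C_Dof T j (t + 1) htn, C_Dof T i t (by omega)]
    omega
  · have e1 : C n ℓ (Dof n lam T) j (t + 1) = C n ℓ (Dof n lam T) j n :=
      C_stable _ j (by omega)
    have e2 : C n ℓ (Dof n lam T) i t = C n ℓ (Dof n lam T) i n :=
      C_stable _ i (by omega)
    rw [e1, e2, C_Dof_n hμ T hT, C_Dof_n hμ T hT]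
    have := hlam (le_of_lt hij)
    omega

end Bijection

section Backward

variable {n ℓ : ℕ} {lam : Fin ℓ → ℕ} {μ : YoungDiagram}

/-- The tableau of a non-crossing term. -/
def Tof (n : ℕ) (lam : Fin ℓ → ℕ) (p : Term n ℓ) : ℕ → ℕ → ℕ := fun i x =>
  if hi : i < ℓ then
    (if x < lam ⟨i, hi⟩ then
      ((Finset.range n).filter (fun t => C n ℓ p ⟨i, hi⟩ (t + 1) ≤ x)).card
    else 0)
  else 0

lemma Tof_pos (p : Term n ℓ) (i : Fin ℓ) {x : ℕ} (hx : x < lam i) :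
    Tof n lam p i x
      = ((Finset.range n).filter (fun t => C n ℓ p i (t + 1) ≤ x)).card := by
  unfold Tof
  rw [dif_pos i.isLt]
  have : (⟨(i : ℕ), i.isLt⟩ : Fin ℓ) = i := by ext; rfl
  rw [this, if_pos hx]

lemma C_eq_lam {p : Term n ℓ} (hp : p ∈ B n ℓ lam) (h1 : p.1 = 1) (i : Fin ℓ) :
    C n ℓ p i n = lam i := by
  have := C_n_of_mem n ℓ lam hp i
  rw [h1, Equiv.Perm.one_apply] at this
  omega

/-- The filtered set defining `Tof` is an initial segment. -/
lemma Tof_initseg (p : Term n ℓ) (i : Fin ℓ) (x : ℕ) :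
    ((Finset.range n).filter (fun t => C n ℓ p i (t + 1) ≤ x))
      = Finset.range (((Finset.range n).filter (fun t => C n ℓ p i (t + 1) ≤ x)).card) := by
  refine initseg (Finset.filter_subset _ _) ?_
  intro a b hab hb
  rw [Finset.mem_filter, Finset.mem_range] at hb ⊢
  exact ⟨by omega, le_trans (by exact_mod_cast C_mono n ℓ p i (by omega)) hb.2⟩

lemma Tof_spec {p : Term n ℓ} (hp : p ∈ B n ℓ lam) (h1 : p.1 = 1) (i : Fin ℓ)
    {x : ℕ} (hx : x < lam i) :
    Tof n lam p i x < n ∧ C n ℓ p i (Tof n lam p i x) ≤ x ∧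
      x < C n ℓ p i (Tof n lam p i x + 1) := by
  have hCn := C_eq_lam hp h1 i
  have hn : 0 < n := by
    rcases Nat.eq_zero_or_pos n with h0 | h0
    · exfalso
      have hle : C n ℓ p i n ≤ C n ℓ p i 0 := C_mono n ℓ p i (by omega)
      have hz : C n ℓ p i 0 = 0 := rfl
      omega
    · exact h0
  set s := (Finset.range n).filter (fun t => C n ℓ p i (t + 1) ≤ x) with hs
  have hseg := Tof_initseg p i x
  rw [← hs] at hseg
  have hT : Tof n lam p i x = s.card := Tof_pos p i hx
  have hnm : n - 1 ∉ s := by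
    rw [hs, Finset.mem_filter]
    rintro ⟨-, hle⟩
    rw [show n - 1 + 1 = n by omega, hCn] at hle
    omega
  have hcard : s.card < n := by
    by_contra hc
    push_neg at hc
    have : n - 1 ∈ Finset.range s.card := Finset.mem_range.2 (by omega)
    rw [← hseg] at this
    exact hnm this
  refine ⟨by omega, ?_, ?_⟩
  · rcases Nat.eq_zero_or_pos (Tof n lam p i x) with h0 | h0
    · rw [h0]
      rw [show C n ℓ p i 0 = 0 from rfl]
      omega
    · have : Tof n lam p i x - 1 ∈ Finset.range s.card := Finset.mem_range.2 (by omega)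
      rw [← hseg] at this
      rw [hs, Finset.mem_filter] at this
      have := this.2
      rw [show Tof n lam p i x - 1 + 1 = Tof n lam p i x by omega] at this
      exact this
  · have : Tof n lam p i x ∉ Finset.range s.card := by
      rw [Finset.mem_range]; omega
    rw [← hseg, hs, Finset.mem_filter] at this
    push_neg at this
    exact this (Finset.mem_range.2 (by omega))

lemma Tof_eq_of {p : Term n ℓ} (hp : p ∈ B n ℓ lam) (h1 : p.1 = 1) (i : Fin ℓ)
    {x t : ℕ} (ht : t < n) (hx : x < lam i)
    (h2 : C n ℓ p i t ≤ x) (h3 : x < C n ℓ p i (t + 1)) :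
    Tof n lam p i x = t := by
  rw [Tof_pos p i hx]
  have : (Finset.range n).filter (fun u => C n ℓ p i (u + 1) ≤ x)
      = Finset.range t := by
    ext u
    rw [Finset.mem_filter, Finset.mem_range, Finset.mem_range]
    constructor
    · rintro ⟨hu, hle⟩
      by_contra huc
      push_neg at huc
      have : C n ℓ p i (t + 1) ≤ C n ℓ p i (u + 1) := C_mono n ℓ p i (by omega)
      omega
    · intro hu
      refine ⟨by omega, ?_⟩
      exact le_trans (C_mono n ℓ p i (by omega)) h2
  rw [this, Finset.card_range]

lemma C_adj {p : Term n ℓ} (h1 : p.1 = 1) (hdom : Dominance p)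
    {i j : Fin ℓ} (hij : (i : ℕ) + 1 = (j : ℕ)) (t : ℕ) :
    C n ℓ p j (t + 1) ≤ C n ℓ p i t := by
  have := hdom i j (by rw [Fin.lt_def]; omega) t
  unfold G at this
  rw [h1] at this
  simp only [Equiv.Perm.one_apply] at this
  omega

/-- Column strictness for `Tof`, adjacent rows. -/
lemma Tof_col_adj {p : Term n ℓ} (hp : p ∈ B n ℓ lam) (h1 : p.1 = 1)
    (hdom : Dominance p) (hlam : Antitone lam) {i j : Fin ℓ}
    (hij : (i : ℕ) + 1 = (j : ℕ)) {x : ℕ} (hx : x < lam j) :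
    Tof n lam p i x < Tof n lam p j x := by
  have hxi : x < lam i := lt_of_lt_of_le hx (hlam (by rw [Fin.le_def]; omega))
  have hCn := C_eq_lam hp h1 i
  set s1 := (Finset.range n).filter (fun t => C n ℓ p i (t + 1) ≤ x) with hs1
  set s2 := (Finset.range n).filter (fun t => C n ℓ p j (t + 1) ≤ x) with hs2
  have hT1 : Tof n lam p i x = s1.card := Tof_pos p i hxi
  have hT2 : Tof n lam p j x = s2.card := Tof_pos p j hx
  have hseg1 := Tof_initseg p i x
  have hseg2 := Tof_initseg p j x
  rw [← hs1] at hseg1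
  rw [← hs2] at hseg2
  rw [hT1, hT2]
  have h0 : 0 ∈ s2 := by
    rw [hs2, Finset.mem_filter, Finset.mem_range]
    have hn : 0 < n := by
      rcases Nat.eq_zero_or_pos n with h0 | h0
      · exfalso
        have hle : C n ℓ p i n ≤ C n ℓ p i 0 := C_mono n ℓ p i (by omega)
        have hz : C n ℓ p i 0 = 0 := rfl
        omega
      · exact h0
    refine ⟨hn, ?_⟩
    have := C_adj h1 hdom hij 0
    rw [show C n ℓ p i 0 = 0 from rfl] at this
    omega
  have hshift : ∀ t, t ∈ s1 → t + 1 ∈ s2 := by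
    intro t ht
    rw [hs1, Finset.mem_filter, Finset.mem_range] at ht
    rw [hs2, Finset.mem_filter, Finset.mem_range]
    have hlt : t + 1 < n := by
      by_contra hc
      push_neg at hc
      have ht1 : t + 1 = n := by omega
      rw [ht1, hCn] at ht
      omega
    exact ⟨hlt, le_trans (C_adj h1 hdom hij (t + 1)) ht.2⟩
  rcases Nat.eq_zero_or_pos s1.card with hc | hc
  · have : 0 < s2.card := Finset.card_pos.2 ⟨0, h0⟩
    omega
  · have hmem : s1.card - 1 ∈ s1 := by
      have : s1.card - 1 ∈ Finset.range s1.card := Finset.mem_range.2 (by omega)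
      rw [← hseg1] at this
      exact this
    have := hshift _ hmem
    rw [show s1.card - 1 + 1 = s1.card by omega, hseg2, Finset.mem_range] at this
    omega

lemma Tof_col {p : Term n ℓ} (hp : p ∈ B n ℓ lam) (h1 : p.1 = 1)
    (hdom : Dominance p) (hlam : Antitone lam) :
    ∀ (jv : ℕ) (hjv : jv < ℓ) (iv : ℕ), iv < jv → ∀ x, x < lam ⟨jv, hjv⟩ →
      Tof n lam p iv x < Tof n lam p jv x := by
  intro jv
  induction jv with
  | zero => omega
  | succ k ih =>
    intro hjv iv hiv x hx
    have hk : k < ℓ := by omega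
    have hadj : Tof n lam p k x < Tof n lam p (k + 1) x :=
      Tof_col_adj hp h1 hdom hlam (i := ⟨k, hk⟩) (j := ⟨k + 1, hjv⟩) rfl hx
    rcases Nat.lt_or_ge iv k with hik | hik
    · have hxk : x < lam ⟨k, hk⟩ :=
        lt_of_lt_of_le hx (hlam (by simp [Fin.le_def]))
      exact lt_trans (ih hk iv hik x hxk) hadj
    · have : iv = k := by omega
      rw [this]
      exact hadj

end Backward

section SSYTmaps

variable {n ℓ : ℕ} {lam : Fin ℓ → ℕ} {μ : YoungDiagram}

/-- The tableau associated to a non-crossing term. -/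
def TofSSYT (hμ : ∀ i j : ℕ, (i, j) ∈ μ ↔ ∃ hi : i < ℓ, j < lam ⟨i, hi⟩)
    (hlam : Antitone lam) (p : Term n ℓ) (hp : p ∈ B n ℓ lam) (h1 : p.1 = 1)
    (hdom : Dominance p) : SemistandardYoungTableau μ where
  entry := Tof n lam p
  row_weak' := by
    intro i j1 j2 hj hcell
    obtain ⟨hi, hj2⟩ := (hμ i j2).1 hcell
    have hj1 : j1 < lam ⟨i, hi⟩ := by omega
    have e1 : Tof n lam p i j1
        = ((Finset.range n).filter (fun t => C n ℓ p ⟨i, hi⟩ (t + 1) ≤ j1)).card :=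
      Tof_pos p ⟨i, hi⟩ hj1
    have e2 : Tof n lam p i j2
        = ((Finset.range n).filter (fun t => C n ℓ p ⟨i, hi⟩ (t + 1) ≤ j2)).card :=
      Tof_pos p ⟨i, hi⟩ hj2
    rw [e1, e2]
    refine Finset.card_le_card ?_
    intro t ht
    rw [Finset.mem_filter] at ht ⊢
    exact ⟨ht.1, by omega⟩
  col_strict' := by
    intro i1 i2 j hlt hcell
    obtain ⟨hi2, hj⟩ := (hμ i2 j).1 hcell
    exact Tof_col hp h1 hdom hlam i2 hi2 i1 hlt j hj
  zeros' := by
    intro i j hc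
    unfold Tof
    by_cases hi : i < ℓ
    · rw [dif_pos hi, if_neg]
      intro hx
      exact hc ((hμ i j).2 ⟨hi, hx⟩)
    · rw [dif_neg hi]

lemma TofSSYT_lt (hμ : ∀ i j : ℕ, (i, j) ∈ μ ↔ ∃ hi : i < ℓ, j < lam ⟨i, hi⟩)
    (hlam : Antitone lam) (p : Term n ℓ) (hp : p ∈ B n ℓ lam) (h1 : p.1 = 1)
    (hdom : Dominance p) :
    ∀ i j : ℕ, (i, j) ∈ μ → (TofSSYT hμ hlam p hp h1 hdom) i j < n := by
  intro i j hc
  obtain ⟨hi, hj⟩ := (hμ i j).1 hc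
  show Tof n lam p i j < n
  have : (⟨i, hi⟩ : Fin ℓ) = ⟨i, hi⟩ := rfl
  exact (Tof_spec hp h1 ⟨i, hi⟩ hj).1

/-- First round trip. -/
lemma Dof_TofSSYT (hμ : ∀ i j : ℕ, (i, j) ∈ μ ↔ ∃ hi : i < ℓ, j < lam ⟨i, hi⟩)
    (hlam : Antitone lam) (p : Term n ℓ) (hp : p ∈ B n ℓ lam) (h1 : p.1 = 1)
    (hdom : Dominance p) :
    Dof n lam (TofSSYT hμ hlam p hp h1 hdom) = p := by
  refine Sigma.ext ?_ (heq_of_eq ?_)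
  · exact h1.symm
  · funext i t
    show ((Finset.range (lam i)).filter
        (fun x => Tof n lam p i x = (t : ℕ))).card = p.2 i t
    have hICo : (Finset.range (lam i)).filter (fun x => Tof n lam p i x = (t : ℕ))
        = Finset.Ico (C n ℓ p i t) (C n ℓ p i ((t : ℕ) + 1)) := by
      ext x
      rw [Finset.mem_filter, Finset.mem_range, Finset.mem_Ico]
      constructor
      · rintro ⟨hx, hT⟩
        have hsp := Tof_spec hp h1 i hx
        rw [hT] at hsp
        exact ⟨hsp.2.1, hsp.2.2⟩
      · rintro ⟨h2, h3⟩
        have hxl : x < lam i := by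
          have hle : C n ℓ p i ((t : ℕ) + 1) ≤ C n ℓ p i n := C_mono n ℓ p i t.isLt
          have := C_eq_lam hp h1 i
          omega
        exact ⟨hxl, Tof_eq_of hp h1 i t.isLt hxl h2 h3⟩
    rw [hICo, Nat.card_Ico]
    have hsucc := C_succ n ℓ p i (t : ℕ)
    have hDx : Dx n ℓ p i (t : ℕ) = p.2 i t := Dx_eq_snd
    omega

/-- Sorted-row counting lemma. -/
lemma sorted_count (hμ : ∀ i j : ℕ, (i, j) ∈ μ ↔ ∃ hi : i < ℓ, j < lam ⟨i, hi⟩)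
    (T : SemistandardYoungTableau μ) (i : Fin ℓ) {x : ℕ} (hx : x < lam i) (t : ℕ) :
    (((Finset.range (lam i)).filter (fun j => T i j < t + 1)).card ≤ x ↔ t < T i x) := by
  constructor
  · intro h
    by_contra hc
    push_neg at hc
    have hsub : Finset.range (x + 1) ⊆
        (Finset.range (lam i)).filter (fun j => T i j < t + 1) := by
      intro j' hj'
      rw [Finset.mem_range] at hj'
      rw [Finset.mem_filter, Finset.mem_range]
      refine ⟨by omega, ?_⟩
      have : T i j' ≤ T i x :=
        T.row_weak_of_le (by omega) ((cell_iff hμ i x).2 hx)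
      omega
    have := Finset.card_le_card hsub
    rw [Finset.card_range] at this
    omega
  · intro h
    have hsub : (Finset.range (lam i)).filter (fun j => T i j < t + 1)
        ⊆ Finset.range x := by
      intro j' hj'
      rw [Finset.mem_filter, Finset.mem_range] at hj'
      rw [Finset.mem_range]
      by_contra hc
      push_neg at hc
      have : T i x ≤ T i j' :=
        T.row_weak_of_le hc ((cell_iff hμ i j').2 hj'.1)
      omega
    have := Finset.card_le_card hsub
    rw [Finset.card_range] at this
    omega

/-- Second round trip. -/
lemma TofSSYT_Dof (hμ : ∀ i j : ℕ, (i, j) ∈ μ ↔ ∃ hi : i < ℓ, j < lam ⟨i, hi⟩)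
    (hlam : Antitone lam) (T : SemistandardYoungTableau μ)
    (hT : ∀ i j : ℕ, (i, j) ∈ μ → T i j < n)
    (hp : Dof n lam T ∈ B n ℓ lam) (h1 : (Dof n lam T).1 = 1)
    (hdom : Dominance (Dof n lam T)) :
    TofSSYT hμ hlam (Dof n lam T) hp h1 hdom = T := by
  ext i j
  show Tof n lam (Dof n lam T) i j = T i j
  by_cases hc : (i, j) ∈ μ
  · obtain ⟨hi, hj⟩ := (hμ i j).1 hc
    have e1 : Tof n lam (Dof n lam T) i j
        = ((Finset.range n).filter
            (fun t => C n ℓ (Dof n lam T) ⟨i, hi⟩ (t + 1) ≤ j)).card :=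
      Tof_pos (Dof n lam T) ⟨i, hi⟩ hj
    rw [e1]
    have hfe : (Finset.range n).filter
        (fun t => C n ℓ (Dof n lam T) ⟨i, hi⟩ (t + 1) ≤ j)
        = Finset.range (T i j) := by
      ext t
      rw [Finset.mem_filter, Finset.mem_range, Finset.mem_range]
      constructor
      · rintro ⟨htn, hle⟩
        rw [C_Dof T ⟨i, hi⟩ (t + 1) (by omega)] at hle
        have := (sorted_count hμ T ⟨i, hi⟩ hj t).1 (by simpa using hle)
        simpa using this
      · intro ht
        have htn : t < n := by
          have := hT i j hc
          omega
        refine ⟨htn, ?_⟩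
        rw [C_Dof T ⟨i, hi⟩ (t + 1) (by omega)]
        have := (sorted_count hμ T ⟨i, hi⟩ hj t).2 (by simpa using ht)
        simpa using this
    rw [hfe, Finset.card_range]
  · have hz : T i j = 0 := T.zeros hc
    rw [hz]
    unfold Tof
    by_cases hi : i < ℓ
    · rw [dif_pos hi, if_neg]
      intro hx
      exact hc ((hμ i j).2 ⟨hi, hx⟩)
    · rw [dif_neg hi]

end SSYTmaps

section Weights

variable {n ℓ : ℕ} {lam : Fin ℓ → ℕ} {μ : YoungDiagram}

lemma prod_cells {M : Type*} [CommMonoid M]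
    (hμ : ∀ i j : ℕ, (i, j) ∈ μ ↔ ∃ hi : i < ℓ, j < lam ⟨i, hi⟩)
    (g : ℕ × ℕ → M) :
    ∏ c ∈ μ.cells, g c = ∏ i : Fin ℓ, ∏ j ∈ Finset.range (lam i), g ((i : ℕ), j) := by
  classical
  rw [← Finset.prod_sigma (Finset.univ : Finset (Fin ℓ)) (fun i => Finset.range (lam i))
    (fun q => g ((q.1 : ℕ), q.2))]
  refine Finset.prod_bij'
    (fun c hc => (⟨⟨c.1, ((hμ c.1 c.2).1 ((YoungDiagram.mem_cells _).1 hc)).choose⟩, c.2⟩ :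
      (_ : Fin ℓ) × ℕ))
    (fun q _ => ((q.1 : ℕ), q.2)) ?_ ?_ ?_ ?_ ?_
  · intro c hc
    rw [Finset.mem_sigma]
    refine ⟨Finset.mem_univ _, ?_⟩
    rw [Finset.mem_range]
    exact ((hμ c.1 c.2).1 ((YoungDiagram.mem_cells _).1 hc)).choose_spec
  · intro q hq
    rw [Finset.mem_sigma, Finset.mem_range] at hq
    exact (YoungDiagram.mem_cells _).2 ((cell_iff hμ q.1 q.2).2 hq.2)
  · intro c hc
    rfl
  · intro q hq
    refine Sigma.ext ?_ (heq_of_eq rfl)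
    · ext
      rfl
  · intro c hc
    rfl

lemma row_prod (T : SemistandardYoungTableau μ)
    (hμ : ∀ i j : ℕ, (i, j) ∈ μ ↔ ∃ hi : i < ℓ, j < lam ⟨i, hi⟩)
    (hT : ∀ i j : ℕ, (i, j) ∈ μ → T i j < n) (i : Fin ℓ) :
    (∏ t : Fin n, (X (t : ℕ) : MvPolynomial ℕ ℂ) ^ (Dof n lam T).2 i t)
      = ∏ j ∈ Finset.range (lam i), (X (T i j) : MvPolynomial ℕ ℂ) := by
  classical
  have hmaps : ∀ j ∈ Finset.range (lam i), T i j ∈ Finset.range n := by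
    intro j hj
    rw [Finset.mem_range] at hj ⊢
    exact hT i j ((cell_iff hμ i j).2 hj)
  rw [← Finset.prod_fiberwise_of_maps_to hmaps (fun j => (X (T i j) : MvPolynomial ℕ ℂ))]
  rw [← Fin.prod_univ_eq_prod_range
    (fun b => ∏ j ∈ (Finset.range (lam i)).filter (fun j => T i j = b),
      (X (T i j) : MvPolynomial ℕ ℂ)) n]
  refine Finset.prod_congr rfl fun t _ => ?_
  have : ∀ j ∈ (Finset.range (lam i)).filter (fun j => T i j = (t : ℕ)),
      (X (T i j) : MvPolynomial ℕ ℂ) = X (t : ℕ) := by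
    intro j hj
    rw [Finset.mem_filter] at hj
    rw [hj.2]
  rw [Finset.prod_congr rfl this, Finset.prod_const]
  rfl

lemma fwt_Dof (T : SemistandardYoungTableau μ)
    (hμ : ∀ i j : ℕ, (i, j) ∈ μ ↔ ∃ hi : i < ℓ, j < lam ⟨i, hi⟩)
    (hT : ∀ i j : ℕ, (i, j) ∈ μ → T i j < n) :
    fwt n ℓ (Dof n lam T)
      = ∏ c ∈ μ.cells, (X (T c.1 c.2) : MvPolynomial ℕ ℂ) := by
  unfold fwt
  have h1 : (Dof n lam T).1 = 1 := rfl
  rw [h1, Equiv.Perm.sign_one]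
  rw [prod_cells hμ (fun c => (X (T c.1 c.2) : MvPolynomial ℕ ℂ))]
  simp only [Units.val_one, one_smul]
  rw [wt]
  exact Finset.prod_congr rfl fun i _ => row_prod T hμ hT i

end Weights

open scoped Classical in
lemma sum_noncross {n ℓ : ℕ} {lam : Fin ℓ → ℕ} {μ : YoungDiagram}
    (hlam : Antitone lam)
    (hμ : ∀ i j : ℕ, (i, j) ∈ μ ↔ ∃ hi : i < ℓ, j < lam ⟨i, hi⟩)
    (S : Finset (SemistandardYoungTableau μ))
    (hS : ∀ T : SemistandardYoungTableau μ, T ∈ S ↔ ∀ i j : ℕ, (i, j) ∈ μ → T i j < n) :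
    ∑ p ∈ (B n ℓ lam).filter (fun p => ¬ Crossing n ℓ p), fwt n ℓ p
      = ∑ T ∈ S, ∏ c ∈ μ.cells, (X (T c.1 c.2) : MvPolynomial ℕ ℂ) := by
  refine (Finset.sum_bij' (fun T hT => Dof n lam T)
    (fun p hp => TofSSYT hμ hlam p
      (Finset.mem_filter.1 hp).1
      (fst_eq_one_of_noncross hlam (Finset.mem_filter.1 hp).1 (Finset.mem_filter.1 hp).2)
      (dominance_of_noncross
        (fst_eq_one_of_noncross hlam (Finset.mem_filter.1 hp).1 (Finset.mem_filter.1 hp).2)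
        (Finset.mem_filter.1 hp).2))
    ?_ ?_ ?_ ?_ ?_).symm
  · intro T hT
    rw [Finset.mem_filter]
    have hTlt := (hS T).1 hT
    refine ⟨Dof_mem_B hμ T hTlt, noncross_of_dominance (Dof_dominance hμ hlam T hTlt)⟩
  · intro p hp
    rw [hS]
    exact TofSSYT_lt hμ hlam p _ _ _
  · intro T hT
    exact TofSSYT_Dof hμ hlam T ((hS T).1 hT) _ _ _
  · intro p hp
    exact Dof_TofSSYT hμ hlam p _ _ _
  · intro T hT
    exact (fwt_Dof T hμ ((hS T).1 hT)).symm

end JT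

/-- The Jacobi–Trudi identity: for a partition `λ = (λ₁ ≥ … ≥ λ_ℓ)`, the Schur
polynomial — defined combinatorially as the sum over semistandard Young tableaux of shape
`λ` with entries in `{0,…,n-1}` of their content monomials — equals the determinant
`det (h_{λ_i - i + j})_{1≤i,j≤ℓ}`. -/
theorem jacobi_trudi (n ℓ : ℕ) (lam : Fin ℓ → ℕ) (hlam : Antitone lam)
    (μ : YoungDiagram) (hμ : ∀ i j : ℕ, (i, j) ∈ μ ↔ ∃ hi : i < ℓ, j < lam ⟨i, hi⟩)
    (S : Finset (SemistandardYoungTableau μ)) (hS : ∀ T : SemistandardYoungTableau μ, T ∈ S ↔ ∀ i j : ℕ, (i, j) ∈ μ → T i j < n) :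
    ∑ T ∈ S, ∏ c ∈ μ.cells, (MvPolynomial.X (T c.1 c.2) : MvPolynomial ℕ ℂ) =
      Matrix.det (Matrix.of fun i j : Fin ℓ =>
        hpoly n ((lam i : ℤ) - (i : ℤ) + (j : ℤ))) := by
  classical
  rw [JT.det_eq_sum_B n ℓ lam]
  rw [← Finset.sum_filter_add_sum_filter_not (JT.B n ℓ lam)
    (fun p => JT.Crossing n ℓ p) (JT.fwt n ℓ)]
  rw [JT.sum_crossing, zero_add]
  exact (JT.sum_noncross hlam hμ S hS).symm
end

section
/- Evaluation of the Schur polynomial at the identity: for a partition λ with at most n parts, s_λ(1,1,…,1) (n ones) = ∏_{(i,j)∈λ} (n + j - i)/h(i,j), where h(i,j) is the hook length of the cell (i,j) of the Young diagram of λ. Equivalently, H_λ · s_λ(1ⁿ) = ∏_{(i,j)∈λ} (n + j - i), where H_λ is the product of all hook lengths of λ. -/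
open Finset

/-- The complete homogeneous symmetric polynomial `h_k(x₁,…,xₙ)`. -/
noncomputable def hfun (n : ℕ) (x : Fin n → ℂ) (k : ℕ) : ℂ :=
  ∑ d ∈ Finset.Nat.antidiagonalTuple n k, ∏ i, x i ^ d i

/-- `h_k` extended to integer index, vanishing for negative `k`. -/
noncomputable def hfunInt (n : ℕ) (x : Fin n → ℂ) (k : ℤ) : ℂ :=
  if 0 ≤ k then hfun n x k.toNat else 0

/-- The Schur polynomial `s_λ(x₁,…,xₙ)` via the Jacobi–Trudi determinant
`det (h_{λ_i - i + j})` (indices `i,j` zero-based). -/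
noncomputable def schur {n ℓ : ℕ} (lam : Fin ℓ → ℕ) (x : Fin n → ℂ) : ℂ :=
  Matrix.det (Matrix.of fun i j : Fin ℓ =>
    hfunInt n x ((lam i : ℤ) - (i : ℤ) + (j : ℤ)))

/-- The conjugate partition: `λ'_j = #{i : λ_i > j}` (zero-based column index `j`). -/
def conjP {ℓ : ℕ} (lam : Fin ℓ → ℕ) (j : ℕ) : ℕ :=
  (Finset.univ.filter fun i => j < lam i).card

/-- The hook product `H_λ = ∏_{(i,j)∈λ} (λ_i + λ'_j - i - j + 1)` (1-based formula;
cells are indexed zero-based here, whence the `- 1`). -/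
noncomputable def hookProd {ℓ : ℕ} (lam : Fin ℓ → ℕ) : ℂ :=
  ∏ i, ∏ j ∈ Finset.range (lam i),
    ((lam i : ℂ) + (conjP lam j : ℂ) - (i : ℂ) - (j : ℂ) - 1)

namespace SchurEvalOnes

open Nat Polynomial

lemma card_adt (n k : ℕ) : (Finset.Nat.antidiagonalTuple n k).card = Nat.multichoose n k := by
  classical
  rw [← Sym.card_sym_fin_eq_multichoose n k, ← Fintype.card_coe]
  refine Fintype.card_congr
    { toFun := fun d => ⟨∑ i, (d.1 i) • ({i} : Multiset (Fin n)), ?_⟩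
      invFun := fun s => ⟨fun i => s.1.count i, ?_⟩
      left_inv := ?_
      right_inv := ?_ }
  · have := d.2
    rw [Finset.Nat.mem_antidiagonalTuple] at this
    simp [← this]
  · rw [Finset.Nat.mem_antidiagonalTuple]
    rw [Multiset.sum_count_eq_card (s := Finset.univ) (m := s.1) (fun a _ => Finset.mem_univ a)]
    exact s.2
  · rintro ⟨d, hd⟩
    ext i
    simp [Multiset.count_sum', Multiset.count_nsmul, Multiset.count_singleton]
  · rintro ⟨s, hs⟩
    refine Subtype.ext ?_
    show ∑ x : Fin n, Multiset.count x s • ({x} : Multiset (Fin n)) = s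
    have h1 : ∑ x ∈ s.toFinset, Multiset.count x s • ({x} : Multiset (Fin n))
        = ∑ x : Fin n, Multiset.count x s • ({x} : Multiset (Fin n)) :=
      Finset.sum_subset (Finset.subset_univ s.toFinset) (by
        intro x _ hx
        simp [Multiset.count_eq_zero_of_notMem (fun h => hx (Multiset.mem_toFinset.2 h))])
    rw [← h1]
    exact Multiset.toFinset_sum_count_nsmul_eq s

lemma hfun_ones (n k : ℕ) (hn : 0 < n) :
    hfun n (fun _ => 1) k = (((n + k - 1).choose (n - 1) : ℕ) : ℂ) := by
  have h1 : hfun n (fun _ => 1) k = ((Finset.Nat.antidiagonalTuple n k).card : ℂ) := by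
    simp [hfun]
  rw [h1, card_adt, Nat.multichoose_eq]
  have h2 : k ≤ n + k - 1 := by omega
  have h3 := Nat.choose_symm h2
  rw [show n + k - 1 - k = n - 1 by omega] at h3
  exact_mod_cast congrArg (fun z : ℕ => (z : ℂ)) h3.symm

lemma descFactorial_cast (m r : ℕ) :
    ((m.descFactorial r : ℕ) : ℂ) = ∏ t ∈ range r, ((m : ℂ) - t) := by
  rcases le_or_gt r m with h | h
  · rw [Nat.descFactorial_eq_prod_range, Nat.cast_prod]
    refine Finset.prod_congr rfl fun t ht => ?_
    exact_mod_cast Nat.cast_sub (le_trans (mem_range.1 ht).le h)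
  · rw [Nat.descFactorial_eq_zero_iff_lt.2 h, Nat.cast_zero]
    refine (Finset.prod_eq_zero (mem_range.2 h) ?_).symm
    simp

def mu {n : ℕ} (lam : Fin n → ℕ) (i : Fin n) : ℕ := lam i + (n - 1 - i.val)

lemma entry_eq {n : ℕ} (hn : 0 < n) (lam : Fin n → ℕ) (i j : Fin n) :
    hfunInt n (fun _ => 1) ((lam i : ℤ) - (i : ℤ) + (j : ℤ)) =
      (((mu lam i + j.val).choose (n - 1) : ℕ) : ℂ) := by
  have hi : i.val < n := i.isLt
  unfold hfunInt
  split_ifs with h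
  · rw [hfun_ones n _ hn]
    congr 3
    have h2 : (((lam i : ℤ) - i + j).toNat : ℤ) = (lam i : ℤ) - i + j := Int.toNat_of_nonneg h
    have h3 : i.val ≤ lam i + j.val := by omega
    have h4 : ((lam i : ℤ) - i + j).toNat = lam i + j.val - i.val := by omega
    rw [h4]; unfold mu; omega
  · push_neg at h
    have h3 : lam i + j.val < i.val := by omega
    rw [Nat.choose_eq_zero_of_lt (by unfold mu; omega)]
    simp

section rows

variable {n : ℕ} (lam : Fin n → ℕ) (hlam : Antitone lam)

include hlam in
lemma mu_lt {i k : Fin n} (h : i < k) : mu lam k < mu lam i := by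
  have h1 : lam k ≤ lam i := hlam h.le
  have h2 : k.val < n := k.isLt
  have h3 : i.val < k.val := h
  unfold mu; omega

lemma conjP_le_n (j : ℕ) : conjP lam j ≤ n := by
  classical
  calc (Finset.univ.filter fun i => j < lam i).card ≤ Finset.univ.card :=
        Finset.card_filter_le _ _
    _ = n := by simp

include hlam in
lemma le_conjP {i : Fin n} {j : ℕ} (h : j < lam i) : i.val + 1 ≤ conjP lam j := by
  classical
  have hsub : Finset.Iic i ⊆ Finset.univ.filter fun r => j < lam r := by
    intro r hr
    simp only [Finset.mem_filter, Finset.mem_univ, true_and]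
    exact lt_of_lt_of_le h (hlam (Finset.mem_Iic.mp hr))
  have := Finset.card_le_card hsub
  rwa [Fin.card_Iic] at this

include hlam in
lemma conjP_le {k : Fin n} {j : ℕ} (h : lam k ≤ j) : conjP lam j ≤ k.val := by
  classical
  have hsub : (Finset.univ.filter fun r => j < lam r) ⊆ Finset.Iio k := by
    intro r hr
    simp only [Finset.mem_filter, Finset.mem_univ, true_and] at hr
    rw [Finset.mem_Iio]
    by_contra hc
    push_neg at hc
    have h2 := hlam hc
    omega
  have := Finset.card_le_card hsub
  rwa [Fin.card_Iio] at this

lemma conjP_anti {j j' : ℕ} (h : j ≤ j') : conjP lam j' ≤ conjP lam j := by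
  classical
  exact Finset.card_le_card (fun r hr => by
    simp only [Finset.mem_filter, Finset.mem_univ, true_and] at hr ⊢
    omega)

include hlam in
lemma hook_row (i : Fin n) :
    (∏ j ∈ range (lam i), (lam i + conjP lam j - (i.val + j + 1))) *
      (∏ k ∈ Ioi i, (mu lam i - mu lam k)) = (mu lam i)! := by
  classical
  have hiM : i.val < n := i.isLt
  set M := mu lam i with hMdef
  set S : Finset ℕ := (Ioi i).image (fun k => mu lam k) with hS
  have hSsub : S ⊆ range M := by
    intro m hm
    rw [hS, Finset.mem_image] at hm
    obtain ⟨k, hk, rfl⟩ := hm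
    exact mem_range.2 (mu_lt lam hlam (Finset.mem_Ioi.1 hk))
  have hinj : ∀ a ∈ Ioi i, ∀ b ∈ Ioi i, mu lam a = mu lam b → a = b := by
    intro a _ b _ hab
    by_contra hne
    rcases lt_or_gt_of_ne hne with hlt | hlt
    · exact absurd hab (by have := mu_lt lam hlam hlt; omega)
    · exact absurd hab (by have := mu_lt lam hlam hlt; omega)
  have hScard : S.card = n - 1 - i.val := by
    rw [hS, Finset.card_image_of_injOn hinj, Fin.card_Ioi]
  set g : ℕ → ℕ := fun j => n + j - conjP lam j with hg
  have hgfacts : ∀ j ∈ range (lam i), i.val + 1 ≤ conjP lam j ∧ conjP lam j ≤ n := by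
    intro j hj
    exact ⟨le_conjP lam hlam (mem_range.1 hj), conjP_le_n lam j⟩
  have hgS : ∀ j ∈ range (lam i), ∀ k : Fin n, g j ≠ mu lam k := by
    intro j hj k
    have hj' := mem_range.1 hj
    have hk : k.val < n := k.isLt
    by_cases hc : j < lam k
    · have h1 := le_conjP lam hlam hc
      have h2 := conjP_le_n lam j
      simp only [hg, hMdef, mu]
      omega
    · push_neg at hc
      have h1 := conjP_le lam hlam hc
      simp only [hg, hMdef, mu]
      omega
  have hgmem : ∀ j ∈ range (lam i), g j ∈ range M \ S := by
    intro j hj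
    obtain ⟨h1, h2⟩ := hgfacts j hj
    have hj' := mem_range.1 hj
    rw [Finset.mem_sdiff]
    constructor
    · rw [mem_range]
      simp only [hg, hMdef, mu]
      omega
    · rw [hS, Finset.mem_image]
      rintro ⟨k, hk, hk2⟩
      exact hgS j hj k hk2.symm
  have hgInj : ∀ a ∈ range (lam i), ∀ b ∈ range (lam i), g a = g b → a = b := by
    intro a ha b hb hab
    by_contra hne
    rcases lt_or_gt_of_ne hne with hlt | hlt
    · have := conjP_anti lam (le_of_lt hlt)
      have := (hgfacts a ha).2
      have := (hgfacts b hb).2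
      simp only [hg] at hab
      omega
    · have := conjP_anti lam (le_of_lt hlt)
      have := (hgfacts a ha).2
      have := (hgfacts b hb).2
      simp only [hg] at hab
      omega
  have hTcard : (range M \ S).card = lam i := by
    rw [Finset.card_sdiff_of_subset hSsub, Finset.card_range, hScard]
    simp only [hMdef, mu]
    omega
  have himg : (range (lam i)).image g = range M \ S := by
    refine Finset.eq_of_subset_of_card_le ?_ ?_
    · intro m hm
      rw [Finset.mem_image] at hm
      obtain ⟨j, hj, rfl⟩ := hm
      exact hgmem j hj
    · rw [hTcard, Finset.card_image_of_injOn hgInj, Finset.card_range]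
  have hprod : ∏ m ∈ range M, (M - m) = M ! :=
    (Nat.descFactorial_eq_prod_range M M).symm.trans (Nat.descFactorial_self M)
  rw [← Finset.prod_sdiff hSsub (f := fun m => M - m)] at hprod
  rw [← hprod]
  congr 1
  · rw [← himg, Finset.prod_image hgInj]
    refine Finset.prod_congr rfl fun j hj => ?_
    obtain ⟨h1, h2⟩ := hgfacts j hj
    have hj' := mem_range.1 hj
    simp only [hg, hMdef, mu]
    omega
  · rw [hS, Finset.prod_image hinj]

lemma fact_prod (a m : ℕ) : a ! * ∏ j ∈ range m, (a + 1 + j) = (a + m)! := by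
  induction m with
  | zero => simp
  | succ m ih =>
    rw [Finset.prod_range_succ, ← mul_assoc, ih,
      show a + (m + 1) = (a + m) + 1 by omega, Nat.factorial_succ]
    ring

lemma content_row (i : Fin n) :
    (∏ j ∈ range (lam i), (n - i.val + j)) * (n - 1 - i.val)! = (mu lam i)! := by
  have hi : i.val < n := i.isLt
  rw [mul_comm, show ∏ j ∈ range (lam i), (n - i.val + j)
      = ∏ j ∈ range (lam i), ((n - 1 - i.val) + 1 + j) from
    Finset.prod_congr rfl fun j _ => by omega, fact_prod]
  congr 1
  unfold mu
  omega

end rows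

section det

variable {n : ℕ} (hn : 0 < n) (lam : Fin n → ℕ)

noncomputable def Pj (n : ℕ) (j : Fin n) : Polynomial ℂ :=
  ∏ t ∈ range (n - 1), (X + C ((j.val : ℂ) - t))

lemma Pj_natDegree (j : Fin n) : (Pj n j).natDegree = n - 1 := by
  rw [Pj, Polynomial.natDegree_prod _ _ (fun t _ => Polynomial.X_add_C_ne_zero _)]
  simp only [Polynomial.natDegree_X_add_C]
  simp

lemma Pj_eval (j : Fin n) (z : ℂ) :
    (Pj n j).eval z = ∏ t ∈ range (n - 1), (z + ((j.val : ℂ) - t)) := by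
  rw [Pj, Polynomial.eval_prod]
  simp

noncomputable def Amat (n : ℕ) : Matrix (Fin n) (Fin n) ℂ :=
  Matrix.of fun k j : Fin n => (Pj n j).coeff k

include hn in
lemma det_factor (x : Fin n → ℂ) :
    Matrix.det (Matrix.of fun i j : Fin n => (Pj n j).eval (x i)) =
      Matrix.det (Matrix.vandermonde x) * Matrix.det (Amat n) := by
  rw [← Matrix.det_mul]
  congr 1
  ext i j
  rw [Matrix.mul_apply]
  simp only [Matrix.of_apply, Matrix.vandermonde, Amat, Matrix.of_apply]
  rw [Polynomial.eval_eq_sum_range' (n := n) (by rw [Pj_natDegree]; omega)]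
  rw [← Fin.sum_univ_eq_sum_range]
  exact Finset.sum_congr rfl fun k _ => mul_comm _ _

include hn in
lemma det_at_y :
    Matrix.det (Matrix.of fun i j : Fin n =>
        (Pj n j).eval (((n - 1 - i.val : ℕ) : ℂ))) = (((n - 1)! : ℕ) : ℂ) ^ n := by
  have htri : (Matrix.of fun i j : Fin n =>
      (Pj n j).eval (((n - 1 - i.val : ℕ) : ℂ))).BlockTriangular id := by
    intro i j hij
    simp only [Matrix.of_apply]
    rw [Pj_eval]
    have hij' : (j : ℕ) < (i : ℕ) := hij
    have hi : i.val < n := i.isLt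
    refine Finset.prod_eq_zero (i := n - 1 - i.val + j.val) (mem_range.2 (by omega)) ?_
    have h1 : ((n - 1 - i.val + j.val : ℕ) : ℂ) = ((n - 1 - i.val : ℕ) : ℂ) + (j.val : ℂ) := by
      push_cast; ring
    rw [h1]
    ring
  rw [Matrix.det_of_upperTriangular htri]
  simp only [Matrix.of_apply]
  have hdiag : ∀ i : Fin n, (Pj n i).eval (((n - 1 - i.val : ℕ) : ℂ)) = (((n - 1)! : ℕ) : ℂ) := by
    intro i
    have hi : i.val < n := i.isLt
    rw [Pj_eval]
    have h2 : ∀ t : ℕ, ((n - 1 - i.val : ℕ) : ℂ) + ((i.val : ℂ) - t)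
        = ((n - 1 : ℕ) : ℂ) - t := by
      intro t
      have : ((n - 1 - i.val : ℕ) : ℂ) = ((n - 1 : ℕ) : ℂ) - (i.val : ℂ) := by
        rw [Nat.cast_sub (by omega)]
      rw [this]; ring
    rw [Finset.prod_congr rfl fun t _ => h2 t, ← descFactorial_cast,
      Nat.descFactorial_self]
  rw [Finset.prod_congr rfl fun i _ => hdiag i, Finset.prod_const, Finset.card_univ,
    Fintype.card_fin]

lemma Pj_eval_mu (i j : Fin n) :
    (Pj n j).eval ((mu lam i : ℂ)) =
      (((n - 1)! : ℕ) : ℂ) * (((mu lam i + j.val).choose (n - 1) : ℕ) : ℂ) := by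
  rw [Pj_eval]
  have h1 : ∀ t : ℕ, ((mu lam i : ℕ) : ℂ) + ((j.val : ℂ) - t)
      = ((mu lam i + j.val : ℕ) : ℂ) - t := by intro t; push_cast; ring
  rw [Finset.prod_congr rfl fun t _ => h1 t, ← descFactorial_cast,
    Nat.descFactorial_eq_factorial_mul_choose]
  push_cast
  ring

include hn in
lemma det_key :
    (∏ i : Fin n, ∏ k ∈ Ioi i, ((i.val : ℂ) - (k.val : ℂ)))
        * schur (n := n) lam (fun _ => (1 : ℂ)) =
      ∏ i : Fin n, ∏ k ∈ Ioi i, ((mu lam k : ℂ) - (mu lam i : ℂ)) := by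
  classical
  set c : ℂ := (((n - 1)! : ℕ) : ℂ) with hc
  have hcne : c ≠ 0 := by
    simp only [hc]
    exact_mod_cast Nat.factorial_ne_zero (n - 1)
  set y : Fin n → ℂ := fun i => ((n - 1 - i.val : ℕ) : ℂ) with hy
  have hVy : Matrix.det (Matrix.vandermonde y) =
      ∏ i : Fin n, ∏ k ∈ Ioi i, ((i.val : ℂ) - (k.val : ℂ)) := by
    rw [Matrix.det_vandermonde]
    refine Finset.prod_congr rfl fun i _ => Finset.prod_congr rfl fun k hk => ?_
    have hik : i < k := Finset.mem_Ioi.1 hk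
    have hi : i.val < n := i.isLt
    have hk' : k.val < n := k.isLt
    simp only [hy]
    have e1 : ((n - 1 - k.val : ℕ) : ℂ) = ((n - 1 : ℕ) : ℂ) - (k.val : ℂ) :=
      Nat.cast_sub (by omega)
    have e2 : ((n - 1 - i.val : ℕ) : ℂ) = ((n - 1 : ℕ) : ℂ) - (i.val : ℂ) :=
      Nat.cast_sub (by omega)
    rw [e1, e2]
    ring
  have hVmu : Matrix.det (Matrix.vandermonde (fun i => (mu lam i : ℂ))) =
      ∏ i : Fin n, ∏ k ∈ Ioi i, ((mu lam k : ℂ) - (mu lam i : ℂ)) := by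
    rw [Matrix.det_vandermonde]
  have h1 := det_factor hn (fun i => (mu lam i : ℂ))
  have h2 := det_factor hn y
  have h3 : Matrix.det (Matrix.of fun i j : Fin n => (Pj n j).eval (y i)) = c ^ n :=
    det_at_y hn
  have h4 : Matrix.det (Matrix.of fun i j : Fin n => (Pj n j).eval ((mu lam i : ℂ)))
      = c ^ n * schur (n := n) lam (fun _ => (1 : ℂ)) := by
    have : (Matrix.of fun i j : Fin n => (Pj n j).eval ((mu lam i : ℂ)))
        = c • (Matrix.of fun i j : Fin n =>
            hfunInt n (fun _ => 1) ((lam i : ℤ) - (i : ℤ) + (j : ℤ))) := by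
      ext i j
      simp only [Matrix.of_apply, Matrix.smul_apply, smul_eq_mul]
      rw [Pj_eval_mu lam i j, entry_eq (by omega) lam i j]
    rw [this, Matrix.det_smul, Fintype.card_fin, schur]
  have hA : Matrix.det (Matrix.vandermonde y) * Matrix.det (Amat n) = c ^ n := by
    rw [← h2, h3]
  have hB : Matrix.det (Matrix.vandermonde (fun i => (mu lam i : ℂ))) * Matrix.det (Amat n)
      = c ^ n * schur (n := n) lam (fun _ => (1 : ℂ)) := by rw [← h1, h4]
  have hcn : (c : ℂ) ^ n ≠ 0 := pow_ne_zero _ hcne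
  have key : (Matrix.det (Matrix.vandermonde y) * schur (n := n) lam (fun _ => (1 : ℂ))) * (c ^ n)
      = (Matrix.det (Matrix.vandermonde (fun i => (mu lam i : ℂ)))) * (c ^ n) := by
    calc (Matrix.det (Matrix.vandermonde y) * schur (n := n) lam (fun _ => (1 : ℂ))) * (c ^ n)
        = Matrix.det (Matrix.vandermonde y)
            * (c ^ n * schur (n := n) lam (fun _ => (1 : ℂ))) := by ring
      _ = Matrix.det (Matrix.vandermonde y)
            * (Matrix.det (Matrix.vandermonde (fun i => (mu lam i : ℂ)))
                * Matrix.det (Amat n)) := by rw [hB]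
      _ = Matrix.det (Matrix.vandermonde (fun i => (mu lam i : ℂ)))
            * (Matrix.det (Matrix.vandermonde y) * Matrix.det (Amat n)) := by ring
      _ = Matrix.det (Matrix.vandermonde (fun i => (mu lam i : ℂ))) * (c ^ n) := by rw [hA]
  have := mul_right_cancel₀ hcn key
  rw [hVy, hVmu] at this
  exact this

end det

section assembly

variable {n : ℕ}

lemma sign_flip (a : Fin n → ℂ) :
    ∏ i : Fin n, ∏ k ∈ Ioi i, (a i - a k) =
      (∏ i : Fin n, ∏ k ∈ Ioi i, (-1 : ℂ)) * ∏ i : Fin n, ∏ k ∈ Ioi i, (a k - a i) := by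
  rw [← Finset.prod_mul_distrib]
  refine Finset.prod_congr rfl fun i _ => ?_
  rw [← Finset.prod_mul_distrib]
  refine Finset.prod_congr rfl fun k _ => ?_
  ring

lemma Esq : (∏ i : Fin n, ∏ k ∈ Ioi i, (-1 : ℂ)) * (∏ i : Fin n, ∏ k ∈ Ioi i, (-1 : ℂ)) = 1 := by
  rw [← Finset.prod_mul_distrib]
  rw [Finset.prod_congr rfl fun i (_ : i ∈ univ) => (Finset.prod_mul_distrib).symm]
  simp

lemma Ioi_fact_nat (i : Fin n) : ∏ k ∈ Ioi i, (k.val - i.val) = (n - 1 - i.val)! := by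
  have hi : i.val < n := i.isLt
  have hbij : ∏ j ∈ range (n - 1 - i.val), (j + 1) = ∏ k ∈ Ioi i, (k.val - i.val) := by
    refine Finset.prod_bij
      (fun j hj => (⟨i.val + 1 + j, by have := mem_range.1 hj; omega⟩ : Fin n)) ?_ ?_ ?_ ?_
    · intro j hj
      rw [Finset.mem_Ioi]
      exact Fin.lt_def.2 (by simp; omega)
    · intro a ha b hb hab
      have h := congrArg Fin.val hab
      simp only at h
      omega
    · intro k hk
      have hik : i < k := Finset.mem_Ioi.1 hk
      have h1 : i.val < k.val := hik
      have h2 : k.val < n := k.isLt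
      refine ⟨k.val - i.val - 1, mem_range.2 (by omega), ?_⟩
      apply Fin.ext
      simp
      omega
    · intro j hj
      simp
      omega
  rw [← hbij, Finset.prod_range_add_one_eq_factorial]

lemma Ioi_fact (i : Fin n) :
    ∏ k ∈ Ioi i, ((k.val : ℂ) - (i.val : ℂ)) = (((n - 1 - i.val)! : ℕ) : ℂ) := by
  rw [← Ioi_fact_nat i, Nat.cast_prod]
  refine Finset.prod_congr rfl fun k hk => ?_
  have hik : i < k := Finset.mem_Ioi.1 hk
  have : i.val ≤ k.val := le_of_lt hik
  rw [Nat.cast_sub this]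

end assembly

end SchurEvalOnes

open SchurEvalOnes in
/-- Evaluation of the Schur polynomial at `n` ones: for a partition `λ` with at most `n` parts,
`H_λ · s_λ(1,…,1) = ∏_{(i,j)∈λ} (n + j - i)` (cells indexed zero-based: content `j - i`
is unchanged), where `H_λ` is the hook product of `λ`. -/
theorem schur_eval_ones (n : ℕ) (lam : Fin n → ℕ) (hlam : Antitone lam) :
    hookProd lam * schur (n := n) lam (fun _ => (1 : ℂ)) =
      ∏ i, ∏ j ∈ Finset.range (lam i), ((n : ℂ) + (j : ℂ) - (i : ℂ)) := by
  classical
  rcases Nat.eq_zero_or_pos n with hn | hn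
  · subst hn
    simp [hookProd, schur, Matrix.det_fin_zero]
  set E : ℂ := ∏ i : Fin n, ∏ k ∈ Ioi i, (-1 : ℂ) with hE
  set Vy : ℂ := ∏ i : Fin n, ∏ k ∈ Ioi i, ((i.val : ℂ) - (k.val : ℂ)) with hVy
  set F : ℂ := ∏ i : Fin n, (((n - 1 - i.val).factorial : ℕ) : ℂ) with hF
  set X : ℂ := ∏ i : Fin n, ∏ k ∈ Ioi i, ((mu lam i : ℂ) - (mu lam k : ℂ)) with hX
  set Vmu : ℂ := ∏ i : Fin n, ∏ k ∈ Ioi i, ((mu lam k : ℂ) - (mu lam i : ℂ)) with hVmu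
  set G : ℂ := ∏ i : Fin n, (((mu lam i).factorial : ℕ) : ℂ) with hG
  have h3 : Vy * schur (n := n) lam (fun _ => (1 : ℂ)) = Vmu := det_key hn lam
  have hEE : E * E = 1 := Esq
  have hVyF : Vy = E * F := by
    rw [hVy, sign_flip (fun i : Fin n => (i.val : ℂ)), hF, hE]
    congr 1
    exact Finset.prod_congr rfl fun i _ => Ioi_fact i
  have hXV : X = E * Vmu := by
    rw [hX, sign_flip (fun i : Fin n => ((mu lam i : ℕ) : ℂ)), hVmu, hE]
  have hVmuX : Vmu = E * X := by
    rw [hXV, ← mul_assoc, hEE, one_mul]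
  -- h1 : hookProd lam * X = G
  have h1 : hookProd lam * X = G := by
    rw [hookProd, hX, ← Finset.prod_mul_distrib, hG]
    refine Finset.prod_congr rfl fun i _ => ?_
    have hcast1 : ∏ j ∈ Finset.range (lam i),
        ((lam i : ℂ) + (conjP lam j : ℂ) - (i : ℂ) - (j : ℂ) - 1)
        = ((∏ j ∈ range (lam i), (lam i + conjP lam j - (i.val + j + 1)) : ℕ) : ℂ) := by
      rw [Nat.cast_prod]
      refine Finset.prod_congr rfl fun j hj => ?_
      have h1 := le_conjP lam hlam (mem_range.1 hj)
      have h2 : i.val + j + 1 ≤ lam i + conjP lam j := by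
        have := mem_range.1 hj; omega
      rw [Nat.cast_sub h2]
      push_cast
      ring
    have hcast2 : ∏ k ∈ Ioi i, ((mu lam i : ℂ) - (mu lam k : ℂ))
        = ((∏ k ∈ Ioi i, (mu lam i - mu lam k) : ℕ) : ℂ) := by
      rw [Nat.cast_prod]
      refine Finset.prod_congr rfl fun k hk => ?_
      have := mu_lt lam hlam (Finset.mem_Ioi.1 hk)
      rw [Nat.cast_sub (le_of_lt this)]
    rw [hcast1, hcast2, ← Nat.cast_mul, hook_row lam hlam i]
  -- h2 : RHS * F = G
  have h2 : (∏ i, ∏ j ∈ Finset.range (lam i), ((n : ℂ) + (j : ℂ) - (i : ℂ))) * F = G := by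
    rw [hF, hG, ← Finset.prod_mul_distrib]
    refine Finset.prod_congr rfl fun i _ => ?_
    have hi : i.val < n := i.isLt
    have hcast3 : ∏ j ∈ Finset.range (lam i), ((n : ℂ) + (j : ℂ) - (i : ℂ))
        = ((∏ j ∈ range (lam i), (n - i.val + j) : ℕ) : ℂ) := by
      rw [Nat.cast_prod]
      refine Finset.prod_congr rfl fun j hj => ?_
      rw [Nat.cast_add, Nat.cast_sub (le_of_lt hi)]
      ring
    rw [hcast3, ← Nat.cast_mul, content_row lam i]
  have hVy_ne : Vy ≠ 0 := by
    rw [hVy]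
    refine Finset.prod_ne_zero_iff.2 fun i _ => Finset.prod_ne_zero_iff.2 fun k hk => ?_
    have hik : i < k := Finset.mem_Ioi.1 hk
    have : (i.val : ℂ) ≠ (k.val : ℂ) := by
      exact_mod_cast fun h => absurd (Nat.cast_inj.1 h : i.val = k.val) (by
        have : i.val < k.val := hik; omega)
    exact sub_ne_zero.2 this
  apply mul_right_cancel₀ hVy_ne
  calc hookProd lam * schur (n := n) lam (fun _ => (1 : ℂ)) * Vy
      = hookProd lam * (Vy * schur (n := n) lam (fun _ => (1 : ℂ))) := by ring
    _ = hookProd lam * Vmu := by rw [h3]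
    _ = hookProd lam * (E * X) := by rw [hVmuX]
    _ = E * (hookProd lam * X) := by ring
    _ = E * G := by rw [h1]
    _ = E * ((∏ i, ∏ j ∈ Finset.range (lam i), ((n : ℂ) + (j : ℂ) - (i : ℂ))) * F) := by
        rw [h2]
    _ = (∏ i, ∏ j ∈ Finset.range (lam i), ((n : ℂ) + (j : ℂ) - (i : ℂ))) * (E * F) := by ring
    _ = (∏ i, ∏ j ∈ Finset.range (lam i), ((n : ℂ) + (j : ℂ) - (i : ℂ))) * Vy := by rw [← hVyF]
end

section
/- (Andréief/Heine identity) For functions f₁,…,fₙ and g₁,…,gₙ of one variable, ∫⋯∫ det(f_j(x_i))_{i,j=1}^n det(g_j(x_i))_{i,j=1}^n dx₁⋯dxₙ = n! · det(∫ f_i(x) g_j(x) dx)_{i,j=1}^n, whenever all integrals converge. -/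
open Finset MeasureTheory

lemma det_expand {n : ℕ} (M : Matrix (Fin n) (Fin n) ℝ) :
    M.det = ∑ σ : Equiv.Perm (Fin n),
      ((Equiv.Perm.sign σ : ℤ) : ℝ) * ∏ i, M i (σ i) := by
  rw [← Matrix.det_transpose, Matrix.det_apply']
  rfl

/-- The Andréief (Heine) identity: for functions `f₁,…,fₙ, g₁,…,gₙ` with all products
`fᵢ gⱼ` integrable,
`∫ det (f_j(x_i)) det (g_j(x_i)) dx₁⋯dxₙ = n! · det (∫ fᵢ(x) gⱼ(x) dx)`. -/
theorem andreief_identity (n : ℕ) (f g : Fin n → ℝ → ℝ)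
    (hint : ∀ i j, Integrable (fun x : ℝ => f i x * g j x)) :
    ∫ x : Fin n → ℝ,
        Matrix.det (Matrix.of fun i j : Fin n => f j (x i)) *
          Matrix.det (Matrix.of fun i j : Fin n => g j (x i)) =
      (Nat.factorial n : ℝ) *
        Matrix.det (Matrix.of fun i j : Fin n => ∫ x : ℝ, f i x * g j x) := by
  classical
  set A : Matrix (Fin n) (Fin n) ℝ := Matrix.of fun i j : Fin n => ∫ x : ℝ, f i x * g j x
  have hdet : ∀ x : Fin n → ℝ,
      Matrix.det (Matrix.of fun i j : Fin n => f j (x i)) *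
        Matrix.det (Matrix.of fun i j : Fin n => g j (x i)) =
      ∑ σ : Equiv.Perm (Fin n), ∑ τ : Equiv.Perm (Fin n),
        (((Equiv.Perm.sign σ : ℤ) : ℝ) * ((Equiv.Perm.sign τ : ℤ) : ℝ)) *
          ∏ i, (f (σ i) (x i) * g (τ i) (x i)) := by
    intro x
    rw [det_expand, det_expand, Finset.sum_mul_sum]
    refine Finset.sum_congr rfl fun σ _ => Finset.sum_congr rfl fun τ _ => ?_
    rw [Finset.prod_mul_distrib]
    simp [Matrix.of_apply]
    ring
  calc
    ∫ x : Fin n → ℝ,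
        Matrix.det (Matrix.of fun i j : Fin n => f j (x i)) *
          Matrix.det (Matrix.of fun i j : Fin n => g j (x i))
      = ∑ σ : Equiv.Perm (Fin n), ∑ τ : Equiv.Perm (Fin n),
        (((Equiv.Perm.sign σ : ℤ) : ℝ) * ((Equiv.Perm.sign τ : ℤ) : ℝ)) *
          ∏ i, A (σ i) (τ i) := by
        simp_rw [hdet]
        rw [integral_finset_sum _ (fun σ _ => integrable_finset_sum _ (fun τ _ =>
          ((Integrable.fintype_prod (𝕜 := ℝ)
            (fun i => hint (σ i) (τ i))).const_mul _)))]
        refine Finset.sum_congr rfl fun σ _ => ?_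
        rw [integral_finset_sum _ (fun τ _ =>
          ((Integrable.fintype_prod (𝕜 := ℝ)
            (fun i => hint (σ i) (τ i))).const_mul _))]
        refine Finset.sum_congr rfl fun τ _ => ?_
        rw [integral_const_mul]
        congr 1
        rw [integral_fintype_prod_volume_eq_prod (fun i y => f (σ i) y * g (τ i) y)]
        rfl
    _ = ∑ _σ : Equiv.Perm (Fin n), A.det := by
        refine Finset.sum_congr rfl fun σ _ => ?_
        rw [det_expand]
        refine Fintype.sum_equiv (Equiv.mulRight σ⁻¹) _ _ fun τ => ?_
        simp only [Equiv.coe_mulRight, Equiv.Perm.coe_mul, Function.comp_apply]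
        have hp : (∏ i, A (σ i) (τ i)) = ∏ i, A i (τ (σ⁻¹ i)) := by
          rw [← Equiv.prod_comp σ (fun i => A i (τ (σ⁻¹ i)))]
          simp
        have hs : ((Equiv.Perm.sign σ : ℤ) : ℝ) * ((Equiv.Perm.sign τ : ℤ) : ℝ)
            = ((Equiv.Perm.sign (τ * σ⁻¹) : ℤ) : ℝ) := by
          rw [Equiv.Perm.sign_mul, Equiv.Perm.sign_inv]
          push_cast
          rcases Int.units_eq_one_or (Equiv.Perm.sign σ) with h | h <;> rw [h] <;> push_cast <;> ring
        rw [hp, hs]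
    _ = (Nat.factorial n : ℝ) * A.det := by
        rw [Finset.sum_const]
        simp [Finset.card_univ, Fintype.card_perm, nsmul_eq_mul]
end
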